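/- arXiv:2205.09008 — 11 statements merged into one kernel-verified Lean document; each statement's English description precedes it below -/
import Mathlib

section
/- Let ν be a Borel probability measure on ℝ with ν([0, B]) = 1, let F(t) = ν((−∞, t]) be its CDF, and let V₁, V₂ be independent random variables each with law ν. Then for every r ∈ [0, B]: E[r·1{min(V₁,V₂) ≤ r < max(V₁,V₂)}] + E[min(V₁,V₂)·1{min(V₁,V₂) > r}] = r·(1 − F(r)²) + ∫_r^B (1 − F(t))² dt. -/
open MeasureTheory ProbabilityTheory Set

/-!
Pointwise, the revenue equals `r · 1{r < max(V₁, V₂)} + (min(V₁, V₂) - r)⁺`. By independence,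
`P(r < max) = 1 - F(r)²` and `P(t < min) = (1 - F(t))²`, and by the layer-cake formula
`E[(min - r)⁺] = ∫_r^∞ P(t < min) dt`, whose integrand vanishes beyond `B`.
-/

theorem reserve_price_revenue_eq (a b r : ℝ) :
    (if min a b ≤ r ∧ r < max a b then r else 0) + (if r < min a b then min a b else 0)
      = (if r < max a b then r else 0) + max (min a b - r) 0 := by
  rcases le_or_gt (min a b) r with hmin | hmin
  · simp [hmin, not_lt.2 hmin]
  · have hmax : r < max a b := hmin.trans_le min_le_max
    simp [hmin, hmax, not_le.2 hmin, max_eq_left (sub_nonneg.2 hmin.le)]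

theorem integral_comp_add_right_Ioi (g : ℝ → ℝ) (a r : ℝ) :
    ∫ t in Ioi a, g (t + r) = ∫ t in Ioi (a + r), g t := by
  simpa [preimage_add_const_Ioi] using
    (measurePreserving_add_right volume r).setIntegral_preimage_emb
      (measurableEmbedding_addRight r) g (Ioi (a + r))

theorem integral_Ioi_eq_intervalIntegral_of_eq_zero {f : ℝ → ℝ} {a b : ℝ} (hab : a ≤ b)
    (hf : ∀ t, b < t → f t = 0) : ∫ t in Ioi a, f t = ∫ t in a..b, f t := by
  rw [intervalIntegral.integral_of_le hab]
  exact setIntegral_eq_of_subset_of_forall_sdiff_eq_zero measurableSet_Ioi Ioc_subset_Ioi_self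
    fun t ht => hf t (not_le.1 fun htb => ht.2 ⟨ht.1, htb⟩)

theorem measure_Ioi_eq_zero_of_measure_Icc_eq_one {ν : Measure ℝ} [IsProbabilityMeasure ν]
    {a b t : ℝ} (hν : ν (Icc a b) = 1) (ht : b < t) : ν (Ioi t) = 0 :=
  measure_mono_null (show Ioi t ⊆ (Icc a b)ᶜ from fun _ hx hxab => not_lt.2 hxab.2 (ht.trans hx))
    ((prob_compl_eq_zero_iff measurableSet_Icc).2 hν)

section

variable {Ω : Type*} {mΩ : MeasurableSpace Ω} {μ : Measure Ω}

theorem integral_max_sub_zero_eq_integral_measureReal_lt [IsFiniteMeasure μ] {X : Ω → ℝ}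
    (hX : Integrable X μ) (r : ℝ) :
    ∫ ω, max (X ω - r) 0 ∂μ = ∫ t in Ioi r, μ.real {ω | t < X ω} := by
  have hpos : Integrable (fun ω => max (X ω - r) 0) μ := (hX.sub (integrable_const r)).pos_part
  have hlevel : ∀ t ∈ Ioi (0 : ℝ),
      μ.real {ω | t < max (X ω - r) 0} = μ.real {ω | t + r < X ω} := by
    intro t ht
    congr 1
    ext ω
    simp only [mem_ofPred_eq, lt_max_iff, not_lt.2 (mem_Ioi.1 ht).le, or_false, lt_sub_iff_add_lt]
  rw [hpos.integral_eq_integral_meas_lt (ae_of_all _ fun ω => le_max_right _ _),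
    setIntegral_congr_fun measurableSet_Ioi hlevel,
    integral_comp_add_right_Ioi (fun t => μ.real {ω | t < X ω}), zero_add]

theorem integrable_of_map_eq_of_measure_Icc_eq_one [IsProbabilityMeasure μ] {ν : Measure ℝ}
    {X : Ω → ℝ} (hX : Measurable X) (hl : μ.map X = ν) {a b : ℝ} (hν : ν (Icc a b) = 1) :
    Integrable X μ := by
  have : IsProbabilityMeasure ν := hl ▸ Measure.isProbabilityMeasure_map hX.aemeasurable
  have hmem : ∀ᵐ ω ∂μ, X ω ∈ Icc a b := (ae_map_iff hX.aemeasurable measurableSet_Icc).1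
    (hl ▸ (mem_ae_iff_prob_eq_one measurableSet_Icc).2 hν)
  refine .of_bound hX.aestronglyMeasurable (max |a| |b|) ?_
  filter_upwards [hmem] with ω hω
  exact abs_le_max_abs_abs hω.1 hω.2

namespace ProbabilityTheory.IndepFun

variable {α : Type*} [MeasurableSpace α] {ν : Measure α} {X Y : Ω → α}

theorem measureReal_preimage_inter_preimage_of_map_eq (hind : IndepFun X Y μ)
    (hX : Measurable X) (hY : Measurable Y) (hlX : μ.map X = ν) (hlY : μ.map Y = ν)
    {s : Set α} (hs : MeasurableSet s) :
    μ.real (X ⁻¹' s ∩ Y ⁻¹' s) = ν.real s ^ 2 := by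
  rw [measureReal_def, hind.measure_inter_preimage_eq_mul _ _ hs hs, ← Measure.map_apply hX hs,
    ← Measure.map_apply hY hs, hlX, hlY, ENNReal.toReal_mul, sq, measureReal_def]

variable [LinearOrder α] [TopologicalSpace α] [OrderClosedTopology α] [OpensMeasurableSpace α]

theorem measureReal_lt_min_of_map_eq (hind : IndepFun X Y μ) (hX : Measurable X)
    (hY : Measurable Y) (hlX : μ.map X = ν) (hlY : μ.map Y = ν) (t : α) :
    μ.real {ω | t < min (X ω) (Y ω)} = ν.real (Ioi t) ^ 2 := by
  have hmin : {ω | t < min (X ω) (Y ω)} = X ⁻¹' Ioi t ∩ Y ⁻¹' Ioi t := by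
    ext ω
    simp
  rw [hmin, hind.measureReal_preimage_inter_preimage_of_map_eq hX hY hlX hlY measurableSet_Ioi]

theorem measureReal_lt_max_of_map_eq [IsProbabilityMeasure μ] (hind : IndepFun X Y μ)
    (hX : Measurable X) (hY : Measurable Y) (hlX : μ.map X = ν) (hlY : μ.map Y = ν) (t : α) :
    μ.real {ω | t < max (X ω) (Y ω)} = 1 - ν.real (Iic t) ^ 2 := by
  have hmax : {ω | t < max (X ω) (Y ω)} = (X ⁻¹' Iic t ∩ Y ⁻¹' Iic t)ᶜ := by
    ext ω
    simp [or_iff_not_imp_left]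
  rw [hmax, probReal_compl_eq_one_sub ((hX measurableSet_Iic).inter (hY measurableSet_Iic)),
    hind.measureReal_preimage_inter_preimage_of_map_eq hX hY hlX hlY measurableSet_Iic]

end ProbabilityTheory.IndepFun

end

theorem two_bidder_revenue_formula_general (B : ℝ)
    (ν : Measure ℝ) [IsProbabilityMeasure ν] (hν : ν (Set.Icc 0 B) = 1)
    (F : ℝ → ℝ) (hF : ∀ t, F t = (ν (Set.Iic t)).toReal)
    (Ω : Type) [MeasureSpace Ω] [IsProbabilityMeasure (volume : Measure Ω)]
    (V₁ V₂ : Ω → ℝ) (hm₁ : Measurable V₁) (hm₂ : Measurable V₂)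
    (hl₁ : Measure.map V₁ volume = ν) (hl₂ : Measure.map V₂ volume = ν)
    (hind : IndepFun V₁ V₂ volume)
    (r : ℝ) (hr : r ∈ Set.Icc (0 : ℝ) B) :
    (∫ ω, ({ω : Ω | min (V₁ ω) (V₂ ω) ≤ r ∧ r < max (V₁ ω) (V₂ ω)}.indicator
        (fun _ => r) ω))
      + (∫ ω, ({ω : Ω | r < min (V₁ ω) (V₂ ω)}.indicator
        (fun ω => min (V₁ ω) (V₂ ω)) ω))
      = r * (1 - (F r) ^ 2) + ∫ t in r..B, (1 - F t) ^ 2 := by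
  set M : Ω → ℝ := fun ω => min (V₁ ω) (V₂ ω)
  have hmM : Measurable M := hm₁.min hm₂
  have hM : Integrable M := (integrable_of_map_eq_of_measure_Icc_eq_one hm₁ hl₁ hν).inf
    (integrable_of_map_eq_of_measure_Icc_eq_one hm₂ hl₂ hν)
  have hT : MeasurableSet {ω | r < max (V₁ ω) (V₂ ω)} :=
    measurableSet_lt measurable_const (hm₁.max hm₂)
  have hS : MeasurableSet {ω | M ω ≤ r ∧ r < max (V₁ ω) (V₂ ω)} :=
    (measurableSet_le hmM measurable_const).inter hT
  have hU : MeasurableSet {ω | r < M ω} := measurableSet_lt measurable_const hmM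
  have hpos : Integrable (fun ω => max (M ω - r) 0) := (hM.sub (integrable_const r)).pos_part
  have hIoi : ∀ t, ν.real (Ioi t) = 1 - F t := fun t => by
    rw [hF, ← compl_Iic, probReal_compl_eq_one_sub measurableSet_Iic, measureReal_def]
  calc _ = ∫ ω, ({ω | r < max (V₁ ω) (V₂ ω)}.indicator (fun _ => r) ω + max (M ω - r) 0) := by
        rw [← integral_add ((integrable_const r).indicator hS) (hM.indicator hU)]
        congr 1 with ω
        simpa only [indicator_apply, mem_ofPred_eq] using reserve_price_revenue_eq (V₁ ω) (V₂ ω) r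
    _ = r * volume.real {ω | r < max (V₁ ω) (V₂ ω)} + ∫ t in Ioi r, volume.real {ω | t < M ω} := by
        rw [integral_add ((integrable_const r).indicator hT) hpos, integral_indicator_const r hT,
          smul_eq_mul, mul_comm, integral_max_sub_zero_eq_integral_measureReal_lt hM]
    _ = r * (1 - ν.real (Iic r) ^ 2) + ∫ t in r..B, ν.real (Ioi t) ^ 2 := by
        simp only [M, hind.measureReal_lt_max_of_map_eq hm₁ hm₂ hl₁ hl₂,
          hind.measureReal_lt_min_of_map_eq hm₁ hm₂ hl₁ hl₂]
        rw [integral_Ioi_eq_intervalIntegral_of_eq_zero hr.2 fun t ht => by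
          simp [measureReal_def, measure_Ioi_eq_zero_of_measure_Icc_eq_one hν ht]]
    _ = _ := by simp only [hIoi, hF, measureReal_def]

/-- Expected revenue of a two-bidder second-price auction with reserve `r`:
if `V₁, V₂` are i.i.d. with law `ν` supported in `[0, B]` and CDF `F`, then
`E[r·1{min ≤ r < max}] + E[min·1{min > r}] = r(1 - F(r)²) + ∫_r^B (1 - F(t))² dt`. -/
theorem two_bidder_revenue_formula (B : ℝ) (hB : 0 < B)
    (ν : Measure ℝ) [IsProbabilityMeasure ν] (hν : ν (Set.Icc 0 B) = 1)
    (F : ℝ → ℝ) (hF : ∀ t, F t = (ν (Set.Iic t)).toReal)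
    (Ω : Type) [MeasureSpace Ω] [IsProbabilityMeasure (volume : Measure Ω)]
    (V₁ V₂ : Ω → ℝ) (hm₁ : Measurable V₁) (hm₂ : Measurable V₂)
    (hl₁ : Measure.map V₁ volume = ν) (hl₂ : Measure.map V₂ volume = ν)
    (hind : IndepFun V₁ V₂ volume)
    (r : ℝ) (hr : r ∈ Set.Icc (0 : ℝ) B) :
    (∫ ω, ({ω : Ω | min (V₁ ω) (V₂ ω) ≤ r ∧ r < max (V₁ ω) (V₂ ω)}.indicator
        (fun _ => r) ω))
      + (∫ ω, ({ω : Ω | r < min (V₁ ω) (V₂ ω)}.indicator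
        (fun ω => min (V₁ ω) (V₂ ω)) ω))
      = r * (1 - (F r) ^ 2) + ∫ t in r..B, (1 - F t) ^ 2 :=
  two_bidder_revenue_formula_general B ν hν F hF Ω V₁ V₂ hm₁ hm₂ hl₁ hl₂ hind r hr
end

section
/- Let n ≥ 2 be an integer, let ν be a Borel probability measure on ℝ with ν([0, B]) = 1, let F(t) = ν((−∞, t]) be its CDF, and let V₁, …, V_n be i.i.d. with law ν; write V⁽¹⁾ for the largest and V⁽²⁾ for the second-largest among V₁, …, V_n. Then for every r ∈ [0, B]: E[r·1{V⁽²⁾ ≤ r < V⁽¹⁾}] + E[V⁽²⁾·1{V⁽²⁾ > r}] = r·(1 − F(r)ⁿ) + ∫_r^B (1 − n·F(t)^{n−1} + (n−1)·F(t)ⁿ) dt. -/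
open MeasureTheory ProbabilityTheory

/-- The largest value among `v 0, …, v (n-1)` (junk value `0` when `n = 0`). -/
noncomputable def firstMax (n : ℕ) (v : Fin n → ℝ) : ℝ :=
  if h : (Finset.univ : Finset (Fin n)).Nonempty then Finset.univ.sup' h v else 0

/-- The second-largest value among `v 0, …, v (n-1)`: the maximum of `min (v i) (v j)`
over pairs `i ≠ j` (junk value `0` when `n ≤ 1`). -/
noncomputable def secondMax (n : ℕ) (v : Fin n → ℝ) : ℝ :=
  if h : ((Finset.univ : Finset (Fin n)).offDiag).Nonempty then
    (Finset.univ : Finset (Fin n)).offDiag.sup' h (fun p => min (v p.1) (v p.2)) else 0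

/-! The event `V⁽²⁾ ≤ t` is the disjoint union of "every value is `≤ t`" and, for each `i`,
"only `V i` exceeds `t`"; independence then gives `P(V⁽²⁾ ≤ t) = Fⁿ + n (1 - F) Fⁿ⁻¹`.
Since `V⁽²⁾ ≤ V⁽¹⁾`, the first expectation is `r (P(r < V⁽¹⁾) - P(r < V⁽²⁾))`. The second one
splits as `r P(r < V⁽²⁾) + E[(V⁽²⁾ - r)⁺]`, and the layer-cake formula turns the last term into
`∫_r^B P(t < V⁽²⁾) dt`, because `V⁽²⁾ ≤ B` almost surely. The two terms `r P(r < V⁽²⁾)` cancel. -/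

section OrderStatistics

variable {n : ℕ} {v : Fin n → ℝ} {t : ℝ}

theorem univ_offDiag_nonempty (hn : 2 ≤ n) : (Finset.univ : Finset (Fin n)).offDiag.Nonempty :=
  ⟨(⟨0, by omega⟩, ⟨1, by omega⟩), by simp [Fin.ext_iff]⟩

theorem firstMax_le_iff (hn : 0 < n) : firstMax n v ≤ t ↔ ∀ i, v i ≤ t := by
  rw [firstMax, dif_pos (Finset.univ_nonempty_iff.2 ⟨⟨0, hn⟩⟩), Finset.sup'_le_iff]
  simp

theorem secondMax_le_iff (hn : 2 ≤ n) :
    secondMax n v ≤ t ↔ ∃ i, ∀ j ≠ i, v j ≤ t := by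
  rw [secondMax, dif_pos (univ_offDiag_nonempty hn), Finset.sup'_le_iff]
  constructor
  · intro h
    by_cases hex : ∃ i, t < v i
    · obtain ⟨i, hi⟩ := hex
      refine ⟨i, fun j hj => ?_⟩
      have := h (j, i) (by simpa using hj)
      exact (min_le_iff.1 this).resolve_right hi.not_ge
    · push Not at hex
      exact ⟨⟨0, by omega⟩, fun j _ => hex j⟩
  · rintro ⟨i, hi⟩ ⟨a, b⟩ hab
    rcases ne_or_eq a i with ha | rfl
    · exact min_le_of_left_le (hi a ha)
    · exact min_le_of_right_le (hi b (Finset.mem_offDiag.1 hab).2.2.symm)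

theorem secondMax_le_iff_forall_le_or_existsUnique_lt (hn : 2 ≤ n) :
    secondMax n v ≤ t ↔ (∀ i, v i ≤ t) ∨ ∃ i, t < v i ∧ ∀ j ≠ i, v j ≤ t := by
  rw [secondMax_le_iff hn]
  constructor
  · rintro ⟨i, hi⟩
    by_cases hvi : v i ≤ t
    · exact Or.inl fun j => (eq_or_ne j i).elim (· ▸ hvi) (hi j)
    · exact Or.inr ⟨i, not_le.1 hvi, hi⟩
  · rintro (h | ⟨i, -, hi⟩)
    exacts [⟨⟨0, by omega⟩, fun j _ => h j⟩, ⟨i, hi⟩]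

theorem secondMax_le_firstMax (hn : 2 ≤ n) : secondMax n v ≤ firstMax n v := by
  rw [firstMax, dif_pos (Finset.univ_nonempty_iff.2 ⟨⟨0, by omega⟩⟩), secondMax,
    dif_pos (univ_offDiag_nonempty hn), Finset.sup'_le_iff]
  exact fun p _ => min_le_of_left_le (Finset.le_sup' v (Finset.mem_univ p.1))

theorem measurable_firstMax : Measurable (firstMax n) := by
  unfold firstMax
  split
  · convert Finset.measurable_sup' (f := fun i (v : Fin n → ℝ) => v i) ‹_›
      fun i _ => measurable_pi_apply i using 1
    ext v
    simp [Finset.sup'_apply]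
  · exact measurable_const

theorem measurable_secondMax : Measurable (secondMax n) := by
  unfold secondMax
  split
  · convert Finset.measurable_sup'
      (f := fun (p : Fin n × Fin n) (v : Fin n → ℝ) => min (v p.1) (v p.2)) ‹_›
      fun p _ => (measurable_pi_apply p.1).min (measurable_pi_apply p.2) using 1
    ext v
    simp [Finset.sup'_apply]
  · exact measurable_const

end OrderStatistics

section IID

open Set

variable {Ω ι : Type*} [MeasurableSpace Ω] [Fintype ι] {μ : Measure Ω} {ν : Measure ℝ}
  {V : ι → Ω → ℝ}

theorem measure_iInter_preimage_eq_prod (hm : ∀ i, Measurable (V i))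
    (hl : ∀ i, μ.map (V i) = ν) (hind : iIndepFun V μ) {s : ι → Set ℝ}
    (hs : ∀ i, MeasurableSet (s i)) : μ (⋂ i, V i ⁻¹' s i) = ∏ i, ν (s i) := by
  rw [hind.meas_iInter fun i => ⟨s i, hs i, rfl⟩]
  exact Finset.prod_congr rfl fun i _ => by rw [← hl i, Measure.map_apply (hm i) (hs i)]

theorem measure_forall_le_eq_pow (hm : ∀ i, Measurable (V i))
    (hl : ∀ i, μ.map (V i) = ν) (hind : iIndepFun V μ) (t : ℝ) :
    μ {ω | ∀ i, V i ω ≤ t} = ν (Iic t) ^ Fintype.card ι := by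
  rw [← Finset.card_univ, ← Finset.prod_const,
    ← measure_iInter_preimage_eq_prod hm hl hind fun _ => measurableSet_Iic]
  congr 1
  ext
  simp

theorem measure_lt_and_forall_ne_le_eq [DecidableEq ι] (hm : ∀ i, Measurable (V i))
    (hl : ∀ i, μ.map (V i) = ν) (hind : iIndepFun V μ) (i : ι) (t : ℝ) :
    μ {ω | t < V i ω ∧ ∀ j ≠ i, V j ω ≤ t}
      = ν (Ioi t) * ν (Iic t) ^ (Fintype.card ι - 1) := by
  have h := measure_iInter_preimage_eq_prod hm hl hind
    (s := fun j => if j = i then Ioi t else Iic t) fun j => by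
      split_ifs
      exacts [measurableSet_Ioi, measurableSet_Iic]
  simp only [apply_ite ν, Finset.prod_ite, Finset.prod_const] at h
  simp only [Finset.filter_eq', Finset.filter_ne', Finset.mem_univ, ↓reduceIte,
    Finset.card_singleton, pow_one, Finset.card_erase_of_mem, Finset.card_univ] at h
  rw [← h]
  congr 1
  ext ω
  simp only [mem_ofPred_eq, mem_iInter, mem_preimage]
  refine ⟨fun ⟨hi, hj⟩ j => ?_,
    fun h => ⟨by simpa using h i, fun j hj => by simpa [hj] using h j⟩⟩
  split_ifs with hji
  exacts [hji ▸ hi, hj j hji]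

variable {n : ℕ} {V : Fin n → Ω → ℝ}

theorem measure_secondMax_le (hn : 2 ≤ n) (hm : ∀ i, Measurable (V i))
    (hl : ∀ i, μ.map (V i) = ν) (hind : iIndepFun V μ) (t : ℝ) :
    μ {ω | secondMax n (V · ω) ≤ t}
      = ν (Iic t) ^ n + n * (ν (Ioi t) * ν (Iic t) ^ (n - 1)) := by
  have hset : {ω | secondMax n (V · ω) ≤ t}
      = {ω | ∀ i, V i ω ≤ t} ∪ ⋃ i, {ω | t < V i ω ∧ ∀ j ≠ i, V j ω ≤ t} := by
    ext ω
    simp [secondMax_le_iff_forall_le_or_existsUnique_lt hn]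
  have hdisj :
      Disjoint {ω | ∀ i, V i ω ≤ t} (⋃ i, {ω | t < V i ω ∧ ∀ j ≠ i, V j ω ≤ t}) :=
    disjoint_left.2 fun ω hle hlt => by
      obtain ⟨i, hi, -⟩ := mem_iUnion.1 hlt
      exact (hle i).not_gt hi
  have hpairwise : Pairwise (Function.onFun Disjoint
      fun i => {ω | t < V i ω ∧ ∀ j ≠ i, V j ω ≤ t}) :=
    fun i k hik => disjoint_left.2 fun ω ⟨_, hi⟩ ⟨hk, _⟩ => (hi k hik.symm).not_gt hk
  have hmeas : ∀ i, MeasurableSet {ω | t < V i ω ∧ ∀ j ≠ i, V j ω ≤ t} := fun _ => by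
    measurability
  rw [hset, measure_union hdisj (.iUnion hmeas), measure_iUnion hpairwise hmeas, tsum_fintype]
  simp [measure_forall_le_eq_pow hm hl hind, measure_lt_and_forall_ne_le_eq hm hl hind]

variable [IsProbabilityMeasure μ]

theorem measureReal_lt_eq_one_sub {X : Ω → ℝ} (hX : Measurable X) (t : ℝ) :
    μ.real {ω | t < X ω} = 1 - μ.real {ω | X ω ≤ t} := by
  rw [← probReal_compl_eq_one_sub (measurableSet_le hX measurable_const)]
  congr 1
  ext
  simp

theorem measureReal_lt_firstMax (hn : 0 < n) (hm : ∀ i, Measurable (V i))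
    (hl : ∀ i, μ.map (V i) = ν) (hind : iIndepFun V μ) (t : ℝ) :
    μ.real {ω | t < firstMax n (V · ω)} = 1 - ν.real (Iic t) ^ n := by
  rw [measureReal_lt_eq_one_sub (X := fun ω => firstMax n (V · ω))
    (measurable_firstMax.comp (measurable_pi_lambda _ hm)), measureReal_def]
  simp [firstMax_le_iff hn, measure_forall_le_eq_pow hm hl hind, measureReal_def]

theorem measureReal_lt_secondMax [IsProbabilityMeasure ν] (hn : 2 ≤ n)
    (hm : ∀ i, Measurable (V i)) (hl : ∀ i, μ.map (V i) = ν) (hind : iIndepFun V μ) (t : ℝ) :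
    μ.real {ω | t < secondMax n (V · ω)}
      = 1 - n * ν.real (Iic t) ^ (n - 1) + (n - 1) * ν.real (Iic t) ^ n := by
  rw [measureReal_lt_eq_one_sub (X := fun ω => secondMax n (V · ω))
    (measurable_secondMax.comp (measurable_pi_lambda _ hm)), measureReal_def,
    measure_secondMax_le hn hm hl hind]
  rw [ENNReal.toReal_add (by finiteness) (by finiteness)]
  simp only [ENNReal.toReal_mul, ENNReal.toReal_pow, ENNReal.toReal_natCast, ← measureReal_def]
  rw [← compl_Iic, probReal_compl_eq_one_sub measurableSet_Iic]
  obtain ⟨k, rfl⟩ : ∃ k, n = k + 1 := ⟨n - 1, by omega⟩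
  rw [Nat.add_sub_cancel]
  push_cast
  ring

end IID

section TailIntegrals

open Set

variable {Ω : Type*} [MeasurableSpace Ω] {μ : Measure Ω} [IsFiniteMeasure μ] {X Y : Ω → ℝ}

theorem integral_indicator_le_lt_const (hX : Measurable X) (hY : Measurable Y)
    (hXY : ∀ ω, X ω ≤ Y ω) (r c : ℝ) :
    ∫ ω, {ω | X ω ≤ r ∧ r < Y ω}.indicator (fun _ => c) ω ∂μ
      = (μ.real {ω | r < Y ω} - μ.real {ω | r < X ω}) * c := by
  have hset : {ω | X ω ≤ r ∧ r < Y ω} = {ω | r < Y ω} \ {ω | r < X ω} := by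
    ext
    simp [and_comm]
  have hsub : {ω | r < X ω} ⊆ {ω | r < Y ω} := fun ω h => h.trans_le (hXY ω)
  have hXm : MeasurableSet {ω | r < X ω} := measurableSet_lt measurable_const hX
  rw [hset, integral_indicator_const _ ((measurableSet_lt measurable_const hY).diff hXm),
    measureReal_sdiff hsub hXm, smul_eq_mul]

variable {r B : ℝ}

theorem integrable_max_sub_const (hX : Measurable X) (hXB : ∀ᵐ ω ∂μ, X ω ≤ B) :
    Integrable (fun ω => max (X ω - r) 0) μ := by
  refine (integrable_const (max (B - r) 0)).mono' (by fun_prop) ?_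
  filter_upwards [hXB] with ω hω
  rw [Real.norm_of_nonneg (le_max_right _ _)]
  exact max_le_max_right 0 (by linarith)

theorem integral_max_sub_const_eq_intervalIntegral (hX : Measurable X) (hrB : r ≤ B)
    (hXB : ∀ᵐ ω ∂μ, X ω ≤ B) :
    ∫ ω, max (X ω - r) 0 ∂μ = ∫ t in r..B, μ.real {ω | t < X ω} := by
  rw [(integrable_max_sub_const hX hXB).integral_eq_integral_meas_lt
    (ae_of_all _ fun _ => le_max_right _ _)]
  calc ∫ t in Ioi 0, μ.real {ω | t < max (X ω - r) 0}
      = ∫ t in Ioi 0, μ.real {ω | t + r < X ω} := by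
        refine setIntegral_congr_fun measurableSet_Ioi fun t (ht : 0 < t) => ?_
        simp [ht.not_gt, lt_sub_iff_add_lt]
    _ = ∫ t in Ioc 0 (B - r), μ.real {ω | t + r < X ω} := by
        refine setIntegral_eq_of_subset_of_forall_sdiff_eq_zero measurableSet_Ioi
          Ioc_subset_Ioi_self fun t ⟨(ht : 0 < t), htB⟩ => ?_
        replace htB : B - r < t := by simpa [ht] using htB
        rw [measureReal_eq_zero_iff, measure_eq_zero_iff_ae_notMem]
        filter_upwards [hXB] with ω hω
        simp only [not_lt]
        linarith
    _ = ∫ t in r..B, μ.real {ω | t < X ω} := by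
        rw [← intervalIntegral.integral_of_le (by linarith),
          intervalIntegral.integral_comp_add_right (fun t => μ.real {ω | t < X ω})]
        simp

theorem integral_indicator_lt_self (hX : Measurable X) (hrB : r ≤ B)
    (hXB : ∀ᵐ ω ∂μ, X ω ≤ B) :
    ∫ ω, {ω | r < X ω}.indicator X ω ∂μ
      = r * μ.real {ω | r < X ω} + ∫ t in r..B, μ.real {ω | t < X ω} := by
  have hmeas : MeasurableSet {ω | r < X ω} := measurableSet_lt measurable_const hX
  have hsplit : {ω | r < X ω}.indicator X
      = fun ω => {ω | r < X ω}.indicator (fun _ => r) ω + max (X ω - r) 0 := by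
    ext ω
    by_cases h : r < X ω
    · simp [h, h.le]
    · simp [h, not_lt.1 h]
  rw [hsplit, integral_add ((integrable_const r).indicator hmeas)
    (integrable_max_sub_const hX hXB), integral_indicator_const _ hmeas,
    integral_max_sub_const_eq_intervalIntegral hX hrB hXB, smul_eq_mul, mul_comm]

end TailIntegrals

theorem n_bidder_revenue_formula_general (n : ℕ) (hn : 2 ≤ n) (B : ℝ)
    (ν : Measure ℝ) [IsProbabilityMeasure ν] (hν : ν (Set.Icc 0 B) = 1)
    (F : ℝ → ℝ) (hF : ∀ t, F t = (ν (Set.Iic t)).toReal)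
    (Ω : Type) [MeasureSpace Ω] [IsProbabilityMeasure (volume : Measure Ω)]
    (V : Fin n → Ω → ℝ) (hm : ∀ i, Measurable (V i))
    (hl : ∀ i, Measure.map (V i) volume = ν)
    (hind : iIndepFun V volume)
    (r : ℝ) (hr : r ∈ Set.Icc (0 : ℝ) B) :
    (∫ ω, ({ω : Ω | secondMax n (fun i => V i ω) ≤ r ∧
        r < firstMax n (fun i => V i ω)}.indicator (fun _ => r) ω))
      + (∫ ω, ({ω : Ω | r < secondMax n (fun i => V i ω)}.indicator
        (fun ω => secondMax n (fun i => V i ω)) ω))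
      = r * (1 - (F r) ^ n)
        + ∫ t in r..B, (1 - (n : ℝ) * (F t) ^ (n - 1) + ((n : ℝ) - 1) * (F t) ^ n) := by
  obtain rfl : F = fun t => ν.real (Set.Iic t) := funext hF
  have hW : Measurable fun ω => firstMax n (V · ω) :=
    measurable_firstMax.comp (measurable_pi_lambda _ hm)
  have hS : Measurable fun ω => secondMax n (V · ω) :=
    measurable_secondMax.comp (measurable_pi_lambda _ hm)
  have hSB : ∀ᵐ ω, secondMax n (V · ω) ≤ B := by
    have hVB : ∀ i, ∀ᵐ ω, V i ω ≤ B := fun i => by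
      refine ae_of_ae_map (p := (· ≤ B)) (hm i).aemeasurable ?_
      rw [hl i]
      filter_upwards [(ae_iff_prob_eq_one (measurable_mem.2 measurableSet_Icc)).2 hν]
        with x hx using hx.2
    filter_upwards [ae_all_iff.2 hVB] with ω hω
    exact (secondMax_le_firstMax hn).trans ((firstMax_le_iff (by omega)).2 hω)
  rw [integral_indicator_le_lt_const hS hW fun ω => secondMax_le_firstMax hn,
    integral_indicator_lt_self hS hr.2 hSB, measureReal_lt_firstMax (by omega) hm hl hind,
    intervalIntegral.integral_congr fun t _ => measureReal_lt_secondMax hn hm hl hind t]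
  ring

/-- Expected revenue of an `n`-bidder second-price auction with reserve `r`:
if `V 0, …, V (n-1)` are i.i.d. with law `ν` supported in `[0, B]` and CDF `F`, and
`V⁽¹⁾, V⁽²⁾` denote the largest and second-largest values, then
`E[r·1{V⁽²⁾ ≤ r < V⁽¹⁾}] + E[V⁽²⁾·1{V⁽²⁾ > r}]
  = r(1 - F(r)ⁿ) + ∫_r^B (1 - n F(t)^{n-1} + (n-1) F(t)ⁿ) dt`. -/
theorem n_bidder_revenue_formula (n : ℕ) (hn : 2 ≤ n) (B : ℝ) (hB : 0 < B)
    (ν : Measure ℝ) [IsProbabilityMeasure ν] (hν : ν (Set.Icc 0 B) = 1)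
    (F : ℝ → ℝ) (hF : ∀ t, F t = (ν (Set.Iic t)).toReal)
    (Ω : Type) [MeasureSpace Ω] [IsProbabilityMeasure (volume : Measure Ω)]
    (V : Fin n → Ω → ℝ) (hm : ∀ i, Measurable (V i))
    (hl : ∀ i, Measure.map (V i) volume = ν)
    (hind : iIndepFun V volume)
    (r : ℝ) (hr : r ∈ Set.Icc (0 : ℝ) B) :
    (∫ ω, ({ω : Ω | secondMax n (fun i => V i ω) ≤ r ∧
        r < firstMax n (fun i => V i ω)}.indicator (fun _ => r) ω))
      + (∫ ω, ({ω : Ω | r < secondMax n (fun i => V i ω)}.indicator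
        (fun ω => secondMax n (fun i => V i ω)) ω))
      = r * (1 - (F r) ^ n)
        + ∫ t in r..B, (1 - (n : ℝ) * (F t) ^ (n - 1) + ((n : ℝ) - 1) * (F t) ^ n) :=
  n_bidder_revenue_formula_general n hn B ν hν F hF Ω V hm hl hind r hr
end

section
/- For every r ∈ [0, B): Rev_{F*}(r) = 2L − L²/B. That is, the seller's two-bidder second-price revenue against F* is the same for every reserve price in [0, B). -/
/-!
Above `L` we have `1 - F*(t) = L / t`, so the tail `∫_r^B (L/t)² dt = L²/r - L²/B` exactly
compensates the reserve term `r (1 - F*(r)²) = 2L - L²/r`. Below `L` the reserve never binds,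
`F*(r) = 0`, and the integrand equals `1` on `[r, L]`, which again leaves `2L - L²/B`.
-/

open MeasureTheory intervalIntegral Set
open scoped Interval

theorem integral_div_sq (c : ℝ) {a b : ℝ} (h : (0 : ℝ) ∉ [[a, b]]) :
    ∫ t in a..b, (c / t) ^ 2 = c ^ 2 * (a⁻¹ - b⁻¹) := by
  have hpow (t : ℝ) : (c / t) ^ 2 = c ^ 2 * t ^ (-2 : ℤ) := by
    rw [zpow_neg, div_pow, zpow_ofNat, div_eq_mul_inv]
  simp_rw [hpow, intervalIntegral.integral_const_mul,
    integral_zpow (n := -2) (Or.inr ⟨by norm_num, h⟩)]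
  norm_num only [zpow_neg_one]
  ring

theorem intervalIntegrable_div_sq (c : ℝ) {a b : ℝ} (h : (0 : ℝ) ∉ [[a, b]]) :
    IntervalIntegrable (fun t => (c / t) ^ 2) volume a b :=
  ContinuousOn.intervalIntegrable <|
    (continuousOn_const.div continuousOn_id fun _ ht => ne_of_mem_of_not_mem ht h).pow 2

noncomputable def equalRevenueCDF (L B v : ℝ) : ℝ :=
  if v < L then 0 else if v < B then 1 - L / v else 1

section EqualRevenue

variable {L B : ℝ}

theorem equalRevenueCDF_of_lt {v : ℝ} (hv : v < L) : equalRevenueCDF L B v = 0 := if_pos hv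

theorem equalRevenueCDF_of_mem_Ico {v : ℝ} (hv : v ∈ Ico L B) :
    equalRevenueCDF L B v = 1 - L / v := by
  simp [equalRevenueCDF, hv.1.not_gt, hv.2]

theorem eqOn_one_sub_equalRevenueCDF_sq_Iio :
    EqOn (fun v => (1 - equalRevenueCDF L B v) ^ 2) 1 (Iio L) := fun v hv => by
  simp [equalRevenueCDF_of_lt (mem_Iio.1 hv)]

theorem eqOn_one_sub_equalRevenueCDF_sq_Ico :
    EqOn (fun v => (1 - equalRevenueCDF L B v) ^ 2) (fun v => (L / v) ^ 2) (Ico L B) :=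
  fun v hv => by simp [equalRevenueCDF_of_mem_Ico hv]

theorem integral_one_sub_equalRevenueCDF_sq_of_mem_Icc (hL : 0 < L) {a : ℝ} (ha : a ∈ Icc L B) :
    ∫ t in a..B, (1 - equalRevenueCDF L B t) ^ 2 = L ^ 2 * (a⁻¹ - B⁻¹) := by
  rw [integral_congr_Ioo_of_le ha.2 (eqOn_one_sub_equalRevenueCDF_sq_Ico.mono
      (Ioo_subset_Ico_self.trans (Ico_subset_Ico_left ha.1)))]
  exact integral_div_sq L (notMem_uIcc_of_lt (hL.trans_le ha.1) (hL.trans_le (ha.1.trans ha.2)))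

theorem integral_one_sub_equalRevenueCDF_sq_of_le (hL : 0 < L) (hLB : L ≤ B) {r : ℝ}
    (hrL : r ≤ L) :
    ∫ t in r..B, (1 - equalRevenueCDF L B t) ^ 2 = (L - r) + L ^ 2 * (L⁻¹ - B⁻¹) := by
  have hhead : IntervalIntegrable (fun t => (1 - equalRevenueCDF L B t) ^ 2) volume r L := by
    refine (intervalIntegrable_const (c := (1 : ℝ))).congr_uIoo ?_
    rw [uIoo_of_le hrL]
    exact (eqOn_one_sub_equalRevenueCDF_sq_Iio.mono Ioo_subset_Iio_self).symm
  have htail : IntervalIntegrable (fun t => (1 - equalRevenueCDF L B t) ^ 2) volume L B := by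
    refine (intervalIntegrable_div_sq L (notMem_uIcc_of_lt hL (hL.trans_le hLB))).congr_uIoo ?_
    rw [uIoo_of_le hLB]
    exact (eqOn_one_sub_equalRevenueCDF_sq_Ico.mono Ioo_subset_Ico_self).symm
  have hhead_eq : ∫ t in r..L, (1 - equalRevenueCDF L B t) ^ 2 = L - r := by
    rw [integral_congr_Ioo_of_le hrL (eqOn_one_sub_equalRevenueCDF_sq_Iio.mono Ioo_subset_Iio_self)]
    simp
  rw [← integral_add_adjacent_intervals hhead htail, hhead_eq,
    integral_one_sub_equalRevenueCDF_sq_of_mem_Icc hL ⟨le_rfl, hLB⟩]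

end EqualRevenue

theorem equal_revenue_indifference_general (B L : ℝ)
    (hL : L ∈ Set.Ioo (0 : ℝ) B)
    (F : ℝ → ℝ)
    (hF : ∀ v, F v = if v < L then 0 else if v < B then 1 - L / v else 1)
    (r : ℝ) (hr : r ∈ Set.Ico (0 : ℝ) B) :
    r * (1 - (F r) ^ 2) + (∫ t in r..B, (1 - F t) ^ 2) = 2 * L - L ^ 2 / B := by
  obtain ⟨hL0, hLB⟩ := hL
  obtain rfl : F = equalRevenueCDF L B := funext hF
  rcases lt_or_ge r L with hrL | hLr
  · rw [equalRevenueCDF_of_lt hrL, integral_one_sub_equalRevenueCDF_sq_of_le hL0 hLB.le hrL.le]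
    field_simp
    ring
  · have hr0 : 0 < r := hL0.trans_le hLr
    rw [equalRevenueCDF_of_mem_Ico ⟨hLr, hr.2⟩,
      integral_one_sub_equalRevenueCDF_sq_of_mem_Icc hL0 ⟨hLr, hr.2.le⟩]
    field_simp
    ring

/-- Against the generalized equal-revenue distribution `F*` with support `[L, B]`,
the seller's two-bidder second-price revenue is `2L - L²/B` for every reserve price
`r ∈ [0, B)`. -/
theorem equal_revenue_indifference (B μ L : ℝ) (hB : 0 < B) (hμ0 : 0 < μ) (hμB : μ < B)
    (hL : L ∈ Set.Ioo (0 : ℝ) B) (hLμ : L * (1 + Real.log (B / L)) = μ)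
    (F : ℝ → ℝ)
    (hF : ∀ v, F v = if v < L then 0 else if v < B then 1 - L / v else 1)
    (r : ℝ) (hr : r ∈ Set.Ico (0 : ℝ) B) :
    r * (1 - (F r) ^ 2) + (∫ t in r..B, (1 - F t) ^ 2) = 2 * L - L ^ 2 / B :=
  equal_revenue_indifference_general B L hL F hF r hr
end

section
/- For every compatible CDF F: Rev_F(Q*) ≥ 2L − L²/B. That is, the generalized equal-revenue distribution F* (which achieves the value 2L − L²/B) minimizes the seller's expected revenue against the reserve-price distribution Q* among all distributions with mean μ and support contained in [0, B]. -/
/-!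
Write `Q* = c δ₀ + q(t) dt` on `(L, B]`, where `c = (1 - L/B) / log (B/L)`, `ψ` is the CDF of `Q*`
on `[L, B]` and `q = ψ'`, and put `G = 1 - F`. By Fubini,
`Rev_F(Q*) = c ∫₀ᴸ G² + ∫_L^B (ψ G² + t q (1 - F²))`.
Pointwise `G² ≥ 2G - 1`, and since `L ψ + t (t - L) q = c t` the second integrand exceeds
`2 c G - L² (ψ - t q) / t²` by the square `(ψ - t q) (G - L/t)²`. Integrating these bounds, the
mean constraint `∫₀ᴮ G = μ = L (1 + log (B/L))` and
`∫_L^B (ψ - t q) / t² = c/L - c log (B/L) / (B - L)` turn the bound into exactly `2L - L²/B`.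
-/

open MeasureTheory Set

section DSlope

variable {𝕜 E : Type*} [NontriviallyNormedField 𝕜] [NormedAddCommGroup E] [NormedSpace 𝕜 E]

theorem hasDerivAt_dslope_of_ne {f : 𝕜 → E} {f' : E} {a b : 𝕜} (hf : HasDerivAt f f' b)
    (hb : b ≠ a) : HasDerivAt (dslope f a) ((b - a)⁻¹ • (f' - dslope f a b)) b := by
  have h := (((hasDerivAt_id b).sub_const a).inv (sub_ne_zero.2 hb)).smul (hf.sub_const (f a))
  refine (h.congr_deriv ?_).congr_of_eventuallyEq
    ((dslope_eventuallyEq_slope_of_ne f hb).trans ?_)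
  · rw [dslope_of_ne f hb, slope_def_module]
    simp only [id, Pi.inv_apply, smul_sub, smul_smul]
    field_simp
    module
  · exact Filter.Eventually.of_forall fun x => slope_def_module f a x

end DSlope

theorem Real.continuousOn_dslope_log {L : ℝ} (hL : 0 < L) :
    ContinuousOn (dslope Real.log L) (Ioi 0) :=
  (continuousOn_dslope (Ioi_mem_nhds hL)).2
    ⟨Real.continuousOn_log.mono fun _ hx => ne_of_gt hx, Real.differentiableAt_log hL.ne'⟩

theorem Real.inv_le_dslope_log {L t : ℝ} (hL : 0 < L) (ht : L < t) :
    t⁻¹ ≤ dslope Real.log L t := by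
  have ht0 : 0 < t := hL.trans ht
  rw [dslope_of_ne _ ht.ne', slope_def_field, le_div_iff₀ (sub_pos.2 ht),
    ← Real.log_div ht0.ne' hL.ne']
  calc t⁻¹ * (t - L) = 1 - (t / L)⁻¹ := by field_simp
    _ ≤ Real.log (t / L) := Real.one_sub_inv_le_log_of_pos (div_pos ht0 hL)

theorem Real.dslope_log_le_inv {L t : ℝ} (hL : 0 < L) (ht : L < t) :
    dslope Real.log L t ≤ L⁻¹ := by
  have ht0 : 0 < t := hL.trans ht
  rw [dslope_of_ne _ ht.ne', slope_def_field, div_le_iff₀ (sub_pos.2 ht),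
    ← Real.log_div ht0.ne' hL.ne']
  calc Real.log (t / L) ≤ t / L - 1 := Real.log_le_sub_one_of_pos (div_pos ht0 hL)
    _ = L⁻¹ * (t - L) := by field_simp

theorem abs_sq_one_sub_le_one {u : ℝ} (hu : u ∈ Icc (0 : ℝ) 1) : |(1 - u) ^ 2| ≤ 1 := by
  rw [abs_le]
  constructor <;> nlinarith [hu.1, hu.2]

theorem abs_one_sub_sq_le_one {u : ℝ} (hu : u ∈ Icc (0 : ℝ) 1) : |1 - u ^ 2| ≤ 1 := by
  rw [abs_le]
  constructor <;> nlinarith [hu.1, hu.2]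

theorem integral_Ioc_add_integral_Ioc {f : ℝ → ℝ} {a b c : ℝ} (hab : a ≤ b) (hbc : b ≤ c)
    (hf : IntegrableOn f (Ioc a c)) :
    (∫ x in Ioc a b, f x) + ∫ x in Ioc b c, f x = ∫ x in Ioc a c, f x := by
  rw [← Ioc_union_Ioc_eq_Ioc hab hbc, setIntegral_union (Ioc_disjoint_Ioc_of_le le_rfl)
    measurableSet_Ioc (hf.mono_set (Ioc_subset_Ioc_right hbc))
    (hf.mono_set (Ioc_subset_Ioc_left hab))]

theorem integral_Ioc_eq_sub_of_hasDerivAt_of_nonneg {g g' : ℝ → ℝ} {a b : ℝ} (hab : a ≤ b)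
    (hcont : ContinuousOn g (Icc a b)) (hderiv : ∀ x ∈ Ioo a b, HasDerivAt g (g' x) x)
    (hpos : ∀ x ∈ Ioo a b, 0 ≤ g' x) : ∫ x in Ioc a b, g' x = g b - g a := by
  rw [← intervalIntegral.integral_of_le hab]
  exact intervalIntegral.integral_eq_sub_of_hasDerivAt_of_le hab hcont hderiv
    ((intervalIntegrable_iff_integrableOn_Ioc_of_le hab).2
      (intervalIntegral.integrableOn_deriv_of_nonneg hcont hderiv hpos))

theorem integral_Ioc_mul_integral_Ioc_eq {a b : ℝ} {f g : ℝ → ℝ} (hf : IntegrableOn f (Ioc a b))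
    (hg : IntegrableOn g (Ioc a b)) :
    ∫ t in Ioc a b, f t * ∫ s in Ioc t b, g s = ∫ s in Ioc a b, (∫ t in Ioc a s, f t) * g s := by
  set W : ℝ × ℝ → ℝ := {p | p.1 < p.2}.indicator fun p => f p.1 * g p.2
  have hW : Integrable W ((volume.restrict (Ioc a b)).prod (volume.restrict (Ioc a b))) :=
    (hf.mul_prod hg).indicator (measurableSet_lt measurable_fst measurable_snd)
  have hleft : ∀ t ∈ Ioc a b, ∫ s in Ioc a b, W (t, s) = f t * ∫ s in Ioc t b, g s := by
    intro t ht
    have : (fun s => W (t, s)) = (Ioi t).indicator fun s => f t * g s := by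
      ext s; simp [W, indicator_apply]
    rw [this, setIntegral_indicator measurableSet_Ioi, Ioc_inter_Ioi, max_eq_right ht.1.le,
      integral_const_mul]
  have hright : ∀ s ∈ Ioc a b, ∫ t in Ioc a b, W (t, s) = (∫ t in Ioc a s, f t) * g s := by
    intro s hs
    have : (fun t => W (t, s)) = (Iio s).indicator fun t => f t * g s := by
      ext t; simp [W, indicator_apply]
    have hset : Ioc a b ∩ Iio s = Ioo a s := by
      ext t
      simp only [mem_inter_iff, mem_Ioc, mem_Ioo, mem_Iio]
      exact ⟨fun h => ⟨h.1.1, h.2⟩, fun h => ⟨⟨h.1, h.2.le.trans hs.2⟩, h.2⟩⟩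
    rw [this, setIntegral_indicator measurableSet_Iio, hset, integral_mul_const,
      integral_Ioc_eq_integral_Ioo]
  rw [← setIntegral_congr_fun measurableSet_Ioc hleft,
    integral_integral_swap (f := fun t s => W (t, s)) hW,
    setIntegral_congr_fun measurableSet_Ioc hright]

/-- `dslope Real.log L t` is `log (t / L) / (t - L)`, extended by `1 / L` at `t = L`; thus
`qStarCdf (qStarAtom B L) L` is `Q*` on `[L, B]`. -/
noncomputable def qStarCdf (c L t : ℝ) : ℝ := c * t * dslope Real.log L t

noncomputable def qStarDensity (c L t : ℝ) : ℝ := c * (1 - L * dslope Real.log L t) / (t - L)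

section QStar

variable {c L t : ℝ}

theorem qStarCdf_self (hL : L ≠ 0) : qStarCdf c L L = c := by
  rw [qStarCdf, dslope_same, Real.deriv_log, mul_assoc, mul_inv_cancel₀ hL, mul_one]

theorem qStarCdf_of_ne (ht : 0 < t) (hL : 0 < L) (htL : t ≠ L) :
    qStarCdf c L t = c * t * Real.log (t / L) / (t - L) := by
  rw [qStarCdf, dslope_of_ne _ htL, slope_def_field, Real.log_div ht.ne' hL.ne', mul_div_assoc]

theorem continuousOn_qStarCdf (hL : 0 < L) : ContinuousOn (qStarCdf c L) (Ioi 0) :=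
  (continuousOn_const.mul continuousOn_id).mul (Real.continuousOn_dslope_log hL)

theorem continuousOn_qStarDensity (hL : 0 < L) : ContinuousOn (qStarDensity c L) (Ioi L) :=
  (continuousOn_const.mul (continuousOn_const.sub (continuousOn_const.mul
    ((Real.continuousOn_dslope_log hL).mono fun _ ht => hL.trans ht)))).div
    (continuousOn_id.sub continuousOn_const) fun _ ht => sub_ne_zero.2 (ne_of_gt ht)

theorem hasDerivAt_qStarCdf (ht : 0 < t) (htL : t ≠ L) :
    HasDerivAt (qStarCdf c L) (qStarDensity c L t) t := by
  have h := ((hasDerivAt_id t).const_mul c).mul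
    (hasDerivAt_dslope_of_ne (Real.hasDerivAt_log ht.ne') htL)
  refine h.congr_deriv ?_
  have : t - L ≠ 0 := sub_ne_zero.2 htL
  simp only [qStarDensity, smul_eq_mul, id]
  field_simp
  ring

theorem hasDerivAt_neg_mul_dslope_log (ht : 0 < t) (htL : t ≠ L) :
    HasDerivAt (fun s => -c * dslope Real.log L s)
      ((qStarCdf c L t - t * qStarDensity c L t) / t ^ 2) t := by
  have h := (hasDerivAt_dslope_of_ne (Real.hasDerivAt_log ht.ne') htL).const_mul (-c)
  refine h.congr_deriv ?_
  have : t - L ≠ 0 := sub_ne_zero.2 htL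
  simp only [qStarCdf, qStarDensity, smul_eq_mul]
  field_simp
  ring

theorem qStarDensity_nonneg (hc : 0 ≤ c) (hL : 0 < L) (ht : L < t) : 0 ≤ qStarDensity c L t := by
  have h := mul_le_mul_of_nonneg_left (Real.dslope_log_le_inv hL ht) hL.le
  rw [mul_inv_cancel₀ hL.ne'] at h
  exact div_nonneg (mul_nonneg hc (sub_nonneg.2 h)) (sub_nonneg.2 ht.le)

theorem qStarCdf_sub_mul_qStarDensity_nonneg (hc : 0 ≤ c) (hL : 0 < L) (ht : L < t) :
    0 ≤ qStarCdf c L t - t * qStarDensity c L t := by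
  have ht0 : 0 < t := hL.trans ht
  have h := mul_le_mul_of_nonneg_left (Real.inv_le_dslope_log hL ht) ht0.le
  rw [mul_inv_cancel₀ ht0.ne'] at h
  have : qStarCdf c L t - t * qStarDensity c L t =
      c * t * (t * dslope Real.log L t - 1) / (t - L) := by
    simp only [qStarCdf, qStarDensity]
    field_simp [sub_ne_zero.2 ht.ne']
    ring
  rw [this]
  exact div_nonneg (mul_nonneg (mul_nonneg hc ht0.le) (sub_nonneg.2 h)) (sub_nonneg.2 ht.le)

theorem two_mul_sub_le_qStar (hc : 0 ≤ c) (hL : 0 < L) (ht : L < t) (u : ℝ) :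
    2 * c * (1 - u) - L ^ 2 * ((qStarCdf c L t - t * qStarDensity c L t) / t ^ 2) ≤
      qStarCdf c L t * (1 - u) ^ 2 + qStarDensity c L t * (t * (1 - u ^ 2)) := by
  have ht0 : 0 < t := hL.trans ht
  -- a perfect square because `L * qStarCdf c L t + t * (t - L) * qStarDensity c L t = c * t`
  have hsq : qStarCdf c L t * (1 - u) ^ 2 + qStarDensity c L t * (t * (1 - u ^ 2)) -
      (2 * c * (1 - u) - L ^ 2 * ((qStarCdf c L t - t * qStarDensity c L t) / t ^ 2)) =
      (qStarCdf c L t - t * qStarDensity c L t) * (1 - u - L / t) ^ 2 := by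
    simp only [qStarCdf, qStarDensity]
    field_simp [sub_ne_zero.2 ht.ne']
    ring
  nlinarith [mul_nonneg (qStarCdf_sub_mul_qStarDensity_nonneg hc hL ht) (sq_nonneg (1 - u - L / t))]

theorem integrableOn_qStarDensity (hc : 0 ≤ c) (hL : 0 < L) (b : ℝ) :
    IntegrableOn (qStarDensity c L) (Ioc L b) :=
  intervalIntegral.integrableOn_deriv_of_nonneg
    ((continuousOn_qStarCdf hL).mono fun _ ht => hL.trans_le ht.1)
    (fun _ ht => hasDerivAt_qStarCdf (hL.trans ht.1) (ne_of_gt ht.1))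
    (fun _ ht => qStarDensity_nonneg hc hL ht.1)

theorem integral_qStarDensity (hc : 0 ≤ c) (hL : 0 < L) (b : ℝ) :
    ∫ t in Ioc L b, qStarDensity c L t = qStarCdf c L (max L b) - c := by
  rcases le_total b L with hb | hb
  · rw [Ioc_eq_empty hb.not_gt, max_eq_left hb, qStarCdf_self hL.ne', Measure.restrict_empty,
      integral_zero_measure, sub_self]
  · have h := integral_Ioc_eq_sub_of_hasDerivAt_of_nonneg hb
      ((continuousOn_qStarCdf hL).mono fun _ ht => hL.trans_le ht.1)
      (fun _ ht => hasDerivAt_qStarCdf (c := c) (hL.trans ht.1) (ne_of_gt ht.1))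
      (fun _ ht => qStarDensity_nonneg hc hL ht.1)
    rw [max_eq_right hb, h, qStarCdf_self hL.ne']

theorem integrableOn_qStarCdf_sub_mul_qStarDensity_div_sq (hc : 0 ≤ c) (hL : 0 < L) (b : ℝ) :
    IntegrableOn (fun t => (qStarCdf c L t - t * qStarDensity c L t) / t ^ 2) (Ioc L b) :=
  intervalIntegral.integrableOn_deriv_of_nonneg
    (continuousOn_const.mul ((Real.continuousOn_dslope_log hL).mono fun _ ht => hL.trans_le ht.1))
    (fun _ ht => hasDerivAt_neg_mul_dslope_log (hL.trans ht.1) (ne_of_gt ht.1))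
    (fun _ ht => div_nonneg (qStarCdf_sub_mul_qStarDensity_nonneg hc hL ht.1) (sq_nonneg _))

theorem integral_qStarCdf_sub_mul_qStarDensity_div_sq (hc : 0 ≤ c) (hL : 0 < L) {b : ℝ}
    (hb : L ≤ b) :
    ∫ t in Ioc L b, (qStarCdf c L t - t * qStarDensity c L t) / t ^ 2 =
      c / L - c * dslope Real.log L b := by
  rw [integral_Ioc_eq_sub_of_hasDerivAt_of_nonneg (g := fun s => -c * dslope Real.log L s) hb
    (continuousOn_const.mul ((Real.continuousOn_dslope_log hL).mono fun _ ht => hL.trans_le ht.1))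
    (fun _ ht => hasDerivAt_neg_mul_dslope_log (hL.trans ht.1) (ne_of_gt ht.1))
    (fun _ ht => div_nonneg (qStarCdf_sub_mul_qStarDensity_nonneg hc hL ht.1) (sq_nonneg _)),
    dslope_same, Real.deriv_log]
  ring

theorem integral_qStarDensity_mul_integral (hc : 0 ≤ c) (hL : 0 < L) {B : ℝ} {g : ℝ → ℝ}
    (hg : IntegrableOn g (Ioc L B)) :
    ∫ t in Ioc L B, qStarDensity c L t * ∫ s in Ioc t B, g s =
      ∫ s in Ioc L B, (qStarCdf c L s - c) * g s := by
  rw [integral_Ioc_mul_integral_Ioc_eq (integrableOn_qStarDensity hc hL B) hg]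
  refine setIntegral_congr_fun measurableSet_Ioc fun s hs => ?_
  rw [integral_qStarDensity hc hL, max_eq_right hs.1.le]

end QStar

noncomputable def qStarAtom (B L : ℝ) : ℝ := (1 - L / B) / Real.log (B / L)

theorem qStarAtom_nonneg {B L : ℝ} (hL : 0 < L) (hLB : L < B) : 0 ≤ qStarAtom B L :=
  div_nonneg (sub_nonneg.2 ((div_le_one (hL.trans hLB)).2 hLB.le))
    (Real.log_nonneg ((one_le_div hL).2 hLB.le))

noncomputable def qStarMeasure (c L B : ℝ) : Measure ℝ :=
  ENNReal.ofReal c • Measure.dirac 0 +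
    (volume.restrict (Ioc L B)).withDensity fun t => ENNReal.ofReal (qStarDensity c L t)

section QStarMeasure

variable {c L : ℝ}

theorem qStarMeasure_Iic (hc : 0 ≤ c) (hL : 0 < L) (B r : ℝ) :
    qStarMeasure c L B (Iic r) =
      ENNReal.ofReal (if r < 0 then 0 else qStarCdf c L (max L (min r B))) := by
  have hdens : ((volume.restrict (Ioc L B)).withDensity
      fun t => ENNReal.ofReal (qStarDensity c L t)) (Iic r) =
      ENNReal.ofReal (qStarCdf c L (max L (min r B)) - c) := by
    rw [withDensity_apply _ measurableSet_Iic, Measure.restrict_restrict measurableSet_Iic,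
      inter_comm, Ioc_inter_Iic, ← ofReal_integral_eq_lintegral_ofReal
        (integrableOn_qStarDensity hc hL _)
        ((ae_restrict_mem measurableSet_Ioc).mono fun t ht => qStarDensity_nonneg hc hL ht.1),
      integral_qStarDensity hc hL, min_comm]
  rw [qStarMeasure, Measure.add_apply, Measure.smul_apply, hdens,
    Measure.dirac_apply' _ measurableSet_Iic]
  split_ifs with hr
  · have hmax : max L (min r B) = L := max_eq_left ((min_le_left r B).trans (hr.trans hL).le)
    simp [hr.not_ge, hmax, qStarCdf_self hL.ne']
  · have hnn : 0 ≤ qStarCdf c L (max L (min r B)) - c := by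
      rw [← integral_qStarDensity hc hL]
      exact setIntegral_nonneg measurableSet_Ioc fun t ht => qStarDensity_nonneg hc hL ht.1
    rw [indicator_of_mem (mem_Iic.2 (not_lt.1 hr)), Pi.one_apply, smul_eq_mul, mul_one,
      ← ENNReal.ofReal_add hc hnn, add_sub_cancel]

theorem integral_qStarMeasure (hc : 0 ≤ c) (hL : 0 < L) {B : ℝ} {f : ℝ → ℝ}
    (hf : IntegrableOn (fun t => qStarDensity c L t * f t) (Ioc L B)) :
    ∫ x, f x ∂qStarMeasure c L B = c * f 0 + ∫ t in Ioc L B, qStarDensity c L t * f t := by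
  have hmeas : AEMeasurable (fun t => ENNReal.ofReal (qStarDensity c L t))
      (volume.restrict (Ioc L B)) :=
    (((continuousOn_qStarDensity hL).mono Ioc_subset_Ioi_self).aemeasurable
      measurableSet_Ioc).ennreal_ofReal
  have hlt : ∀ᵐ t ∂volume.restrict (Ioc L B), ENNReal.ofReal (qStarDensity c L t) < ⊤ :=
    ae_of_all _ fun _ => ENNReal.ofReal_lt_top
  have htoReal : (fun t => (ENNReal.ofReal (qStarDensity c L t)).toReal • f t)
      =ᵐ[volume.restrict (Ioc L B)] fun t => qStarDensity c L t * f t := by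
    filter_upwards [ae_restrict_mem measurableSet_Ioc] with t ht
    rw [ENNReal.toReal_ofReal (qStarDensity_nonneg hc hL ht.1), smul_eq_mul]
  rw [qStarMeasure, integral_add_measure, integral_smul_measure, integral_dirac,
    ENNReal.toReal_ofReal hc, smul_eq_mul, integral_withDensity_eq_integral_toReal_smul₀ hmeas hlt,
    integral_congr_ae htoReal]
  · exact (integrable_dirac ENNReal.coe_lt_top).smul_measure ENNReal.ofReal_ne_top
  · exact (integrable_withDensity_iff_integrable_smul₀' hmeas hlt).2 (hf.congr htoReal.symm)

end QStarMeasure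

theorem eq_qStarMeasure {B L : ℝ} (hL : 0 < L) (hLB : L < B) (Qm : Measure ℝ) [IsFiniteMeasure Qm]
    (hQm : ∀ r, (Qm (Iic r)).toReal =
      if r < 0 then 0
      else if r ≤ L then (1 - L / B) / Real.log (B / L)
      else if r ≤ B then (1 - L / B) * (r / (r - L)) * (Real.log (r / L) / Real.log (B / L))
      else 1) :
    Qm = qStarMeasure (qStarAtom B L) L B := by
  have hB : 0 < B := hL.trans hLB
  have hlog : Real.log (B / L) ≠ 0 := (Real.log_pos ((one_lt_div hL).2 hLB)).ne'
  refine Measure.ext_of_Iic _ _ fun r => ?_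
  rw [qStarMeasure_Iic (qStarAtom_nonneg hL hLB) hL, qStarAtom,
    ← ENNReal.ofReal_toReal (measure_ne_top Qm _), hQm r]
  congr 1
  split_ifs with hr0 hrL hrB
  · rfl
  · rw [max_eq_left ((min_le_left r B).trans hrL), qStarCdf_self hL.ne']
  · rw [min_eq_left hrB, max_eq_right (not_le.1 hrL).le,
      qStarCdf_of_ne (hL.trans (not_le.1 hrL)) hL (ne_of_gt (not_le.1 hrL))]
    field_simp
  · rw [min_eq_right (not_le.1 hrB).le, max_eq_right hLB.le, qStarCdf_of_ne hB hL hLB.ne']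
    field_simp [sub_ne_zero.2 hLB.ne']


noncomputable def revenue (F : ℝ → ℝ) (B r : ℝ) : ℝ :=
  r * (1 - F r ^ 2) + ∫ t in r..B, (1 - F t) ^ 2

section Revenue

variable {F : ℝ → ℝ} (hF : Measurable F) (hF01 : ∀ v, F v ∈ Icc (0 : ℝ) 1) {B c L : ℝ}

include hF hF01 in
theorem integrableOn_one_sub_sq (a b : ℝ) : IntegrableOn (fun t => (1 - F t) ^ 2) (Ioc a b) :=
  IntegrableOn.of_bound measure_Ioc_lt_top
    ((measurable_const.sub hF).pow_const 2).aestronglyMeasurable 1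
    (ae_of_all _ fun t => abs_sq_one_sub_le_one (hF01 t))

include hF hF01 in
theorem integrableOn_one_sub (a b : ℝ) : IntegrableOn (fun t => 1 - F t) (Ioc a b) :=
  IntegrableOn.of_bound measure_Ioc_lt_top (measurable_const.sub hF).aestronglyMeasurable 1
    (ae_of_all _ fun t => by
      rw [Real.norm_eq_abs, abs_le]
      constructor <;> linarith [(hF01 t).1, (hF01 t).2])

include hF hF01 in
theorem measurable_revenue : Measurable (revenue F B) := by
  have hcont : Continuous fun r => ∫ t in r..B, (1 - F t) ^ 2 := by
    simp_rw [intervalIntegral.integral_symm B]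
    exact (intervalIntegral.continuous_primitive (fun a b =>
      intervalIntegrable_iff.2 (integrableOn_one_sub_sq hF hF01 _ _)) B).neg
  exact (measurable_id.mul (measurable_const.sub (hF.pow_const 2))).add hcont.measurable

include hF01 in
theorem abs_revenue_le {r : ℝ} (hr : 0 ≤ r) (hrB : r ≤ B) : |revenue F B r| ≤ B := by
  have h1 : |r * (1 - F r ^ 2)| ≤ r := by
    rw [abs_mul, abs_of_nonneg hr]
    exact mul_le_of_le_one_right hr (abs_one_sub_sq_le_one (hF01 r))
  have h2 : |∫ t in r..B, (1 - F t) ^ 2| ≤ B - r := by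
    simpa [abs_of_nonneg (sub_nonneg.2 hrB)] using
      intervalIntegral.norm_integral_le_of_norm_le_const (C := 1) (a := r) (b := B)
        fun t _ => (Real.norm_eq_abs _).trans_le (abs_sq_one_sub_le_one (hF01 t))
  rw [revenue]
  linarith [abs_add_le (r * (1 - F r ^ 2)) (∫ t in r..B, (1 - F t) ^ 2)]

include hF hF01 in
theorem integrableOn_qStarDensity_mul_revenue (hc : 0 ≤ c) (hL : 0 < L) :
    IntegrableOn (fun t => qStarDensity c L t * revenue F B t) (Ioc L B) :=
  (integrableOn_qStarDensity hc hL B).mul_bdd (measurable_revenue hF hF01).aestronglyMeasurable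
    ((ae_restrict_mem measurableSet_Ioc).mono fun _ ht =>
      abs_revenue_le hF01 (hL.trans ht.1).le ht.2)

include hF hF01 in
theorem integrableOn_qStarDensity_mul_mul_one_sub_sq (hc : 0 ≤ c) (hL : 0 < L) :
    IntegrableOn (fun t => qStarDensity c L t * (t * (1 - F t ^ 2))) (Ioc L B) :=
  (integrableOn_qStarDensity hc hL B).mul_bdd
    (measurable_id.mul (measurable_const.sub (hF.pow_const 2))).aestronglyMeasurable
    ((ae_restrict_mem measurableSet_Ioc).mono fun t ht => by
      rw [Real.norm_eq_abs, abs_mul, abs_of_pos (hL.trans ht.1)]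
      exact (mul_le_of_le_one_right (hL.trans ht.1).le (abs_one_sub_sq_le_one (hF01 t))).trans
        ht.2)

include hF hF01 in
theorem integrableOn_qStarCdf_mul_one_sub_sq (hL : 0 < L) :
    IntegrableOn (fun t => qStarCdf c L t * (1 - F t) ^ 2) (Ioc L B) :=
  (((continuousOn_qStarCdf hL).mono fun _ ht => hL.trans_le ht.1).integrableOn_Icc.mono_set
    Ioc_subset_Icc_self).mul_bdd ((measurable_const.sub hF).pow_const 2).aestronglyMeasurable
    (ae_of_all _ (fun t => abs_sq_one_sub_le_one (hF01 t)))

include hF hF01 in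
theorem qStar_revenue_decomposition (hc : 0 ≤ c) (hL : 0 < L) (hLB : L ≤ B) :
    c * revenue F B 0 + ∫ t in Ioc L B, qStarDensity c L t * revenue F B t =
      c * (∫ t in Ioc 0 L, (1 - F t) ^ 2) + ∫ t in Ioc L B,
        (qStarCdf c L t * (1 - F t) ^ 2 + qStarDensity c L t * (t * (1 - F t ^ 2))) := by
  have hG2 := integrableOn_one_sub_sq hF hF01
  have hA := integrableOn_qStarDensity_mul_mul_one_sub_sq hF hF01 hc hL (B := B)
  have hP := integrableOn_qStarCdf_mul_one_sub_sq hF hF01 hL (c := c) (B := B)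
  have hrev0 : revenue F B 0 =
      (∫ t in Ioc 0 L, (1 - F t) ^ 2) + ∫ t in Ioc L B, (1 - F t) ^ 2 := by
    rw [revenue, intervalIntegral.integral_of_le (hL.le.trans hLB),
      integral_Ioc_add_integral_Ioc hL.le hLB (hG2 0 B)]
    ring
  have hfubini : ∫ t in Ioc L B, qStarDensity c L t * revenue F B t =
      (∫ t in Ioc L B, qStarDensity c L t * (t * (1 - F t ^ 2))) +
        ∫ t in Ioc L B, (qStarCdf c L t - c) * (1 - F t) ^ 2 := by
    rw [← integral_qStarDensity_mul_integral hc hL (hG2 L B), ← sub_eq_iff_eq_add',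
      ← integral_sub (integrableOn_qStarDensity_mul_revenue hF hF01 hc hL) hA]
    refine setIntegral_congr_fun measurableSet_Ioc fun t ht => ?_
    rw [revenue, intervalIntegral.integral_of_le ht.2]
    ring
  have hsplit : ∫ t in Ioc L B, (qStarCdf c L t - c) * (1 - F t) ^ 2 =
      (∫ t in Ioc L B, qStarCdf c L t * (1 - F t) ^ 2) - c * ∫ t in Ioc L B, (1 - F t) ^ 2 := by
    rw [← integral_const_mul, ← integral_sub hP ((hG2 L B).const_mul c)]
    exact setIntegral_congr_fun measurableSet_Ioc fun t _ => by ring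
  rw [hrev0, hfubini, hsplit, integral_add hP hA]
  ring

include hF hF01 in
theorem qStar_revenue_lower_bound (hc : 0 ≤ c) (hL : 0 < L) (hLB : L ≤ B) :
    c * (2 * (∫ t in Ioc 0 L, (1 - F t)) - L) +
        (2 * c * (∫ t in Ioc L B, (1 - F t)) - L ^ 2 * (c / L - c * dslope Real.log L B)) ≤
      c * (∫ t in Ioc 0 L, (1 - F t) ^ 2) + ∫ t in Ioc L B,
        (qStarCdf c L t * (1 - F t) ^ 2 + qStarDensity c L t * (t * (1 - F t ^ 2))) := by
  have hG := integrableOn_one_sub hF hF01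
  have hR := integrableOn_qStarCdf_sub_mul_qStarDensity_div_sq hc hL B
  have h1 : IntegrableOn (fun _ => (1 : ℝ)) (Ioc 0 L) := integrableOn_const measure_Ioc_lt_top.ne
  refine add_le_add (mul_le_mul_of_nonneg_left ?_ hc) ?_
  · calc 2 * (∫ t in Ioc 0 L, (1 - F t)) - L = ∫ t in Ioc 0 L, (2 * (1 - F t) - 1) := by
          rw [integral_sub ((hG 0 L).const_mul 2) h1, integral_const_mul, setIntegral_const,
            Real.volume_real_Ioc_of_le hL.le, sub_zero, smul_eq_mul, mul_one]
      _ ≤ ∫ t in Ioc 0 L, (1 - F t) ^ 2 :=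
          setIntegral_mono_on (((hG 0 L).const_mul 2).sub h1) (integrableOn_one_sub_sq hF hF01 0 L)
            measurableSet_Ioc fun t _ => by nlinarith [sq_nonneg (F t)]
  · calc 2 * c * (∫ t in Ioc L B, (1 - F t)) - L ^ 2 * (c / L - c * dslope Real.log L B) =
          ∫ t in Ioc L B, (2 * c * (1 - F t) -
            L ^ 2 * ((qStarCdf c L t - t * qStarDensity c L t) / t ^ 2)) := by
          rw [integral_sub ((hG L B).const_mul _) (hR.const_mul _), integral_const_mul,
            integral_const_mul, integral_qStarCdf_sub_mul_qStarDensity_div_sq hc hL hLB]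
      _ ≤ _ := setIntegral_mono_on (((hG L B).const_mul (2 * c)).sub' (hR.const_mul (L ^ 2)))
          ((integrableOn_qStarCdf_mul_one_sub_sq hF hF01 hL).add
            (integrableOn_qStarDensity_mul_mul_one_sub_sq hF hF01 hc hL))
          measurableSet_Ioc fun t ht => two_mul_sub_le_qStar hc hL ht.1 (F t)

end Revenue

theorem qStar_revenue_lower_bound_eq {B L a b : ℝ} (hL : 0 < L) (hLB : L < B)
    (hab : a + b = L * (1 + Real.log (B / L))) :
    qStarAtom B L * (2 * a - L) + (2 * qStarAtom B L * b -
      L ^ 2 * (qStarAtom B L / L - qStarAtom B L * dslope Real.log L B)) = 2 * L - L ^ 2 / B := by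
  have hB : 0 < B := hL.trans hLB
  have hlog : 0 < Real.log (B / L) := Real.log_pos ((one_lt_div hL).2 hLB)
  have hBL : B - L ≠ 0 := sub_ne_zero.2 hLB.ne'
  rw [dslope_of_ne _ hLB.ne', slope_def_field, ← Real.log_div hB.ne' hL.ne', qStarAtom,
    show b = L * (1 + Real.log (B / L)) - a by linarith]
  field_simp
  ring

theorem Fstar_minimizes_revenue_against_Qstar_general (B μ L : ℝ)
    (hL : L ∈ Set.Ioo (0 : ℝ) B) (hLμ : L * (1 + Real.log (B / L)) = μ)
    (Qs : ℝ → ℝ)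
    (hQs : ∀ r, Qs r =
      if r < 0 then 0
      else if r ≤ L then (1 - L / B) / Real.log (B / L)
      else if r ≤ B then (1 - L / B) * (r / (r - L)) * (Real.log (r / L) / Real.log (B / L))
      else 1)
    (Qm : Measure ℝ) [IsProbabilityMeasure Qm]
    (hQm : ∀ r, (Qm (Set.Iic r)).toReal = Qs r)
    (F : ℝ → ℝ) (hFmono : Monotone F)
    (hF01 : ∀ v, F v ∈ Set.Icc (0 : ℝ) 1)
    (hFmean : (∫ v in (0 : ℝ)..B, (1 - F v)) = μ) :
    (∫ r, (r * (1 - (F r) ^ 2) + ∫ t in r..B, (1 - F t) ^ 2) ∂Qm)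
      ≥ 2 * L - L ^ 2 / B := by
  obtain ⟨hL0, hLB⟩ := hL
  have hF : Measurable F := hFmono.measurable
  have hc := qStarAtom_nonneg hL0 hLB
  have hmean : (∫ t in Ioc 0 L, (1 - F t)) + ∫ t in Ioc L B, (1 - F t) =
      L * (1 + Real.log (B / L)) := by
    rw [integral_Ioc_add_integral_Ioc hL0.le hLB.le (integrableOn_one_sub hF hF01 0 B),
      ← intervalIntegral.integral_of_le (hL0.trans hLB).le, hFmean, hLμ]
  rw [eq_qStarMeasure hL0 hLB Qm fun r => (hQm r).trans (hQs r)]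
  show 2 * L - L ^ 2 / B ≤ ∫ r, revenue F B r ∂qStarMeasure (qStarAtom B L) L B
  rw [integral_qStarMeasure hc hL0 (integrableOn_qStarDensity_mul_revenue hF hF01 hc hL0),
    qStar_revenue_decomposition hF hF01 hc hL0 hLB.le, ← qStar_revenue_lower_bound_eq hL0 hLB hmean]
  exact qStar_revenue_lower_bound hF hF01 hc hL0 hLB.le

/-- Against the reserve-price distribution `Q*` (an atom at `0` plus an absolutely
continuous part on `(L, B]`, identified as the probability measure `Qm` whose CDF is
`Q*`), every value distribution with mean `μ` and support in `[0, B]` yields expected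
two-bidder second-price revenue at least `2L - L²/B` (the value achieved by `F*`). -/
theorem Fstar_minimizes_revenue_against_Qstar (B μ L : ℝ)
    (hB : 0 < B) (hμ0 : 0 < μ) (hμB : μ < B)
    (hL : L ∈ Set.Ioo (0 : ℝ) B) (hLμ : L * (1 + Real.log (B / L)) = μ)
    (Qs : ℝ → ℝ)
    (hQs : ∀ r, Qs r =
      if r < 0 then 0
      else if r ≤ L then (1 - L / B) / Real.log (B / L)
      else if r ≤ B then (1 - L / B) * (r / (r - L)) * (Real.log (r / L) / Real.log (B / L))
      else 1)
    (Qm : Measure ℝ) [IsProbabilityMeasure Qm]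
    (hQm : ∀ r, (Qm (Set.Iic r)).toReal = Qs r)
    (F : ℝ → ℝ) (hFmono : Monotone F)
    (hFrc : ∀ x, ContinuousWithinAt F (Set.Ici x) x)
    (hF01 : ∀ v, F v ∈ Set.Icc (0 : ℝ) 1)
    (hF0 : ∀ v, v < 0 → F v = 0) (hFB : ∀ v, B ≤ v → F v = 1)
    (hFmean : (∫ v in (0 : ℝ)..B, (1 - F v)) = μ) :
    (∫ r, (r * (1 - (F r) ^ 2) + ∫ t in r..B, (1 - F t) ^ 2) ∂Qm)
      ≥ 2 * L - L ^ 2 / B :=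
  Fstar_minimizes_revenue_against_Qstar_general B μ L hL hLμ Qs hQs Qm hQm F hFmono hF01 hFmean
end

section
/- Let λ = 2·(1 − L/B)/log(B/L) and, for v ∈ (L, B], define h_v(z) = v·Q*'(v)·(1 − z²) + Q*(v)·(1 − z)² − λ·(1 − z) for z ∈ ℝ, where Q*' denotes the derivative of Q* on (L, B]. Then for every v ∈ (L, B] and every z ∈ [0, 1]: h_v(1 − L/v) ≤ h_v(z). -/
/-!
On `(L, B]` we have `Q* = c · r log(r/L)/(r - L)` with `c = (1 - L/B)/log(B/L)` and `λ = 2c`, so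
`h_v` is the quadratic `a(1 - z²) + b(1 - z)² - 2c(1 - z)` with `a = v Q*'(v)` and `b = Q*(v)`.
Its leading coefficient `b - a = c v (v log(v/L) - (v - L))/(v - L)²` is nonnegative because
`log x ≥ 1 - 1/x`, and its vertex is exactly `z = 1 - L/v`.
-/

open Real Set

lemma quadratic_le_of_vertex {a b lam z₀ : ℝ} (hlead : 0 ≤ b - a)
    (hvertex : 2 * (b - a) * (1 - z₀) = lam - 2 * a) (z : ℝ) :
    a * (1 - z₀ ^ 2) + b * (1 - z₀) ^ 2 - lam * (1 - z₀)
      ≤ a * (1 - z ^ 2) + b * (1 - z) ^ 2 - lam * (1 - z) := by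
  have hdiff : a * (1 - z ^ 2) + b * (1 - z) ^ 2 - lam * (1 - z)
      - (a * (1 - z₀ ^ 2) + b * (1 - z₀) ^ 2 - lam * (1 - z₀)) = (b - a) * (z - z₀) ^ 2 := by
    linear_combination (z₀ - z) * hvertex
  rw [← sub_nonneg, hdiff]
  exact mul_nonneg hlead (sq_nonneg _)

/-- The formula of `Q*` on `(L, B]`, with `c = (1 - L/B)/log(B/L)`. -/
noncomputable def qStarTail (c L r : ℝ) : ℝ := c * (r * log (r / L) / (r - L))

noncomputable def qStarTailDeriv (c L r : ℝ) : ℝ := c * ((r - L) - L * log (r / L)) / (r - L) ^ 2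

section

variable {c L r : ℝ}

lemma hasDerivAt_qStarTail (hL : 0 < L) (hr : L < r) :
    HasDerivAt (qStarTail c L) (qStarTailDeriv c L r) r := by
  have hrL : r - L ≠ 0 := sub_ne_zero.2 hr.ne'
  have hr0 : r ≠ 0 := (hL.trans hr).ne'
  have hlog : HasDerivAt (fun x => log (x / L)) (1 / L / (r / L)) r :=
    ((hasDerivAt_id' r).div_const L).log (div_ne_zero hr0 hL.ne')
  have hquot := (((hasDerivAt_id' r).mul hlog).div ((hasDerivAt_id' r).sub_const L) hrL).const_mul c
  refine hquot.congr_deriv ?_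
  simp only [qStarTailDeriv, Pi.mul_apply]
  field_simp
  ring

lemma qStarTail_sub_mul_deriv (hr : r ≠ L) :
    qStarTail c L r - r * qStarTailDeriv c L r
      = c * r * (r * log (r / L) - (r - L)) / (r - L) ^ 2 := by
  have hrL : r - L ≠ 0 := sub_ne_zero.2 hr
  simp only [qStarTail, qStarTailDeriv]
  field_simp
  ring

lemma sub_le_mul_log_div (hL : 0 < L) (hr : L < r) : r - L ≤ r * log (r / L) := by
  have hr0 : 0 < r := hL.trans hr
  have h := mul_le_mul_of_nonneg_left (one_sub_inv_le_log_of_pos (div_pos hr0 hL)) hr0.le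
  rwa [inv_div, mul_sub, mul_one, mul_div_cancel₀ _ hr0.ne'] at h

lemma qStarTail_sub_mul_deriv_nonneg (hc : 0 ≤ c) (hL : 0 < L) (hr : L < r) :
    0 ≤ qStarTail c L r - r * qStarTailDeriv c L r := by
  rw [qStarTail_sub_mul_deriv hr.ne']
  have := sub_nonneg.2 (sub_le_mul_log_div hL hr)
  have := (hL.trans hr).le
  positivity

lemma qStarTail_vertex (hr0 : r ≠ 0) (hr : r ≠ L) :
    2 * (qStarTail c L r - r * qStarTailDeriv c L r) * (1 - (1 - L / r))
      = 2 * c - 2 * (r * qStarTailDeriv c L r) := by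
  have hrL : r - L ≠ 0 := sub_ne_zero.2 hr
  rw [qStarTail_sub_mul_deriv hr, qStarTailDeriv]
  field_simp
  ring

end

theorem lagrangian_integrand_min_two_bidders_general (B L : ℝ)
    (hL : L ∈ Set.Ioo (0 : ℝ) B)
    (Qs : ℝ → ℝ)
    (hQs : ∀ r, Qs r =
      if r < 0 then 0
      else if r ≤ L then (1 - L / B) / Real.log (B / L)
      else if r ≤ B then (1 - L / B) * (r / (r - L)) * (Real.log (r / L) / Real.log (B / L))
      else 1)
    (lam : ℝ) (hlam : lam = 2 * (1 - L / B) / Real.log (B / L))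
    (h : ℝ → ℝ → ℝ)
    (hh : ∀ v z, h v z = v * (derivWithin Qs (Set.Ioc L B) v) * (1 - z ^ 2)
      + Qs v * (1 - z) ^ 2 - lam * (1 - z)) :
    ∀ v ∈ Set.Ioc L B, ∀ z ∈ Set.Icc (0 : ℝ) 1, h v (1 - L / v) ≤ h v z := by
  intro v hv z _
  obtain ⟨hL0, hLB⟩ := hL
  set c := (1 - L / B) / log (B / L)
  have hc : 0 ≤ c := div_nonneg (sub_nonneg.2 (div_le_one_of_le₀ hLB.le (hL0.trans hLB).le))
    (log_nonneg ((one_le_div hL0).2 hLB.le))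
  have hQ : EqOn Qs (qStarTail c L) (Ioc L B) := fun r hr => by
    rw [hQs, if_neg (by linarith [hr.1]), if_neg (not_le.2 hr.1), if_pos hr.2, qStarTail]
    ring
  have hQ' : derivWithin Qs (Ioc L B) v = qStarTailDeriv c L v := by
    rw [derivWithin_congr hQ (hQ hv)]
    exact (hasDerivAt_qStarTail hL0 hv.1).hasDerivWithinAt.derivWithin (uniqueDiffOn_Ioc L B v hv)
  have hlam' : lam = 2 * c := by rw [hlam, mul_div_assoc]
  rw [hh, hh, hQ', hQ hv, hlam']
  exact quadratic_le_of_vertex (qStarTail_sub_mul_deriv_nonneg hc hL0 hv.1)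
    (qStarTail_vertex (hL0.trans hv.1).ne' hv.1.ne') z

/-- Pointwise minimization of the Lagrangian integrand in the two-bidder game:
with `λ = 2(1 - L/B)/log(B/L)` and `h_v(z) = v·Q*'(v)·(1 - z²) + Q*(v)·(1 - z)² - λ(1 - z)`
(where `Q*'` is the derivative of `Q*` on `(L, B]`), for every `v ∈ (L, B]` the choice
`z = 1 - L/v` minimizes `h_v` over `z ∈ [0, 1]`. -/
theorem lagrangian_integrand_min_two_bidders (B μ L : ℝ)
    (hB : 0 < B) (hμ0 : 0 < μ) (hμB : μ < B)
    (hL : L ∈ Set.Ioo (0 : ℝ) B) (hLμ : L * (1 + Real.log (B / L)) = μ)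
    (Qs : ℝ → ℝ)
    (hQs : ∀ r, Qs r =
      if r < 0 then 0
      else if r ≤ L then (1 - L / B) / Real.log (B / L)
      else if r ≤ B then (1 - L / B) * (r / (r - L)) * (Real.log (r / L) / Real.log (B / L))
      else 1)
    (lam : ℝ) (hlam : lam = 2 * (1 - L / B) / Real.log (B / L))
    (h : ℝ → ℝ → ℝ)
    (hh : ∀ v z, h v z = v * (derivWithin Qs (Set.Ioc L B) v) * (1 - z ^ 2)
      + Qs v * (1 - z) ^ 2 - lam * (1 - z)) :
    ∀ v ∈ Set.Ioc L B, ∀ z ∈ Set.Icc (0 : ℝ) 1, h v (1 - L / v) ≤ h v z :=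
  lagrangian_integrand_min_two_bidders_general B L hL Qs hQs lam hlam h hh
end

section
/- The function Q* is a valid CDF of a distribution on [0, B]: Q* is nondecreasing on [0, B], takes values in [0, 1], satisfies Q*(B) = 1, and lim_{r → L⁺} Q*(r) = (1 − L/B)/log(B/L) = Q*(L) (so Q* is continuous on (0, B]). -/
/-!
For `r > L`, `Q*(r) = c · φ(r / L)` with `c = (1 - L/B) / log (B/L)` and
`φ(t) = t log t / (t - 1)`, the slope of the secant of the convex function `x ↦ x log x`
between `1` and `t`. Extending `φ` by its limit `φ(1) = (x log x)'(1) = 1` gives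
`Q*(r) = c · φ(max (r/L) 1)` for every `r`. Secant slopes of a convex function are monotone and
`x log x` is differentiable at `1`, so `Q*` is monotone and continuous; `Q*(B) = 1` is
algebra, and `Q*(0) = c ≥ 0`.
-/

open Real Set Filter

theorem ConvexOn.monotoneOn_dslope {S : Set ℝ} {f : ℝ → ℝ} {a : ℝ} (hf : ConvexOn ℝ S f)
    (ha : a ∈ S) (hd : DifferentiableAt ℝ f a) : MonotoneOn (dslope f a) S := by
  intro x hx y hy hxy
  rcases eq_or_ne x a with rfl | hxa
  · rcases hxy.eq_or_lt with rfl | hxy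
    · rfl
    rw [dslope_same, dslope_of_ne _ hxy.ne']
    exact hf.deriv_le_slope hx hy hxy hd
  rcases eq_or_ne y a with rfl | hya
  · rw [dslope_same, dslope_of_ne _ hxa, slope_comm]
    exact hf.slope_le_deriv hx hy (lt_of_le_of_ne hxy hxa) hd
  rw [dslope_of_ne _ hxa, dslope_of_ne _ hya]
  exact hf.slope_mono ha ⟨hx, hxa⟩ ⟨hy, hya⟩ hxy

theorem dslope_mul_log_one_self : dslope (fun x : ℝ => x * log x) 1 1 = 1 := by
  rw [dslope_same, deriv_mul_log one_ne_zero, log_one, zero_add]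

theorem dslope_mul_log_one_of_ne {t : ℝ} (ht : t ≠ 1) :
    dslope (fun x : ℝ => x * log x) 1 t = t * log t / (t - 1) := by
  rw [dslope_of_ne _ ht, slope_def_field, log_one, mul_zero, sub_zero]

theorem monotoneOn_dslope_mul_log_one : MonotoneOn (dslope (fun x : ℝ => x * log x) 1) (Ici 0) :=
  strictConvexOn_mul_log.convexOn.monotoneOn_dslope (mem_Ici.2 zero_le_one)
    (hasDerivAt_mul_log one_ne_zero).differentiableAt

theorem continuous_dslope_mul_log_one : Continuous (dslope (fun x : ℝ => x * log x) 1) :=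
  continuousOn_univ.1 <| (continuousOn_dslope univ_mem).2
    ⟨continuous_mul_log.continuousOn,
      (hasDerivAt_mul_log one_ne_zero).differentiableAt⟩

theorem Qstar_is_valid_cdf_general (B L : ℝ)
    (hB : 0 < B)
    (hL : L ∈ Set.Ioo (0 : ℝ) B)
    (Qs : ℝ → ℝ)
    (hQs : ∀ r, Qs r =
      if r ≤ L then (1 - L / B) / Real.log (B / L)
      else (1 - L / B) * (r / (r - L)) * (Real.log (r / L) / Real.log (B / L))) :
    MonotoneOn Qs (Set.Icc 0 B) ∧
    (∀ r ∈ Set.Icc (0 : ℝ) B, Qs r ∈ Set.Icc (0 : ℝ) 1) ∧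
    Qs B = 1 ∧
    Filter.Tendsto Qs (nhdsWithin L (Set.Ioi L))
      (nhds ((1 - L / B) / Real.log (B / L))) ∧
    Qs L = (1 - L / B) / Real.log (B / L) ∧
    ContinuousOn Qs (Set.Ioc 0 B) := by
  obtain ⟨hL0, hLB⟩ := hL
  set c := (1 - L / B) / log (B / L)
  have hc : 0 ≤ c :=
    div_nonneg (sub_nonneg.2 ((div_le_one hB).2 hLB.le)) (log_nonneg ((one_le_div hL0).2 hLB.le))
  have hQ : ∀ r, Qs r = c * dslope (fun x : ℝ => x * log x) 1 (max (r / L) 1) := by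
    intro r
    by_cases hr : r ≤ L
    · rw [hQs, if_pos hr, max_eq_right ((div_le_one hL0).2 hr), dslope_mul_log_one_self, mul_one]
    · have hrL : 1 < r / L := (one_lt_div hL0).2 (not_le.1 hr)
      rw [hQs, if_neg hr, max_eq_left hrL.le, dslope_mul_log_one_of_ne hrL.ne']
      simp only [c]
      field_simp
  have hmono : Monotone Qs := fun r s hrs => by
    rw [hQ, hQ]
    gcongr
    exact monotoneOn_dslope_mul_log_one (mem_Ici.2 (zero_le_one.trans (le_max_right _ _)))
      (mem_Ici.2 (zero_le_one.trans (le_max_right _ _))) (by gcongr)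
  have hcont : Continuous Qs := by
    rw [funext hQ]
    exact continuous_const.mul (continuous_dslope_mul_log_one.comp (by fun_prop))
  have hQB : Qs B = 1 := by
    have hlog : log (B / L) ≠ 0 := (log_pos ((one_lt_div hL0).2 hLB)).ne'
    rw [hQs, if_neg (not_le.2 hLB)]
    field_simp
  have hQL : Qs L = c := by rw [hQs, if_pos le_rfl]
  refine ⟨hmono.monotoneOn _, fun r hr => ⟨?_, ?_⟩, hQB,
    hQL ▸ hcont.continuousAt.tendsto.mono_left nhdsWithin_le_nhds, hQL, hcont.continuousOn⟩
  · calc 0 ≤ c := hc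
      _ = Qs 0 := by rw [hQs, if_pos hL0.le]
      _ ≤ Qs r := hmono hr.1
  · exact hQB ▸ hmono hr.2

/-- `Q*` is a valid CDF of a distribution on `[0, B]`: it is nondecreasing on `[0, B]`,
takes values in `[0, 1]` there, satisfies `Q*(B) = 1`, its right limit at `L` equals
`(1 - L/B)/log(B/L) = Q*(L)`, and `Q*` is continuous on `(0, B]`. -/
theorem Qstar_is_valid_cdf (B μ L : ℝ)
    (hB : 0 < B) (hμ0 : 0 < μ) (hμB : μ < B)
    (hL : L ∈ Set.Ioo (0 : ℝ) B) (hLμ : L * (1 + Real.log (B / L)) = μ)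
    (Qs : ℝ → ℝ)
    (hQs : ∀ r, Qs r =
      if r ≤ L then (1 - L / B) / Real.log (B / L)
      else (1 - L / B) * (r / (r - L)) * (Real.log (r / L) / Real.log (B / L))) :
    MonotoneOn Qs (Set.Icc 0 B) ∧
    (∀ r ∈ Set.Icc (0 : ℝ) B, Qs r ∈ Set.Icc (0 : ℝ) 1) ∧
    Qs B = 1 ∧
    Filter.Tendsto Qs (nhdsWithin L (Set.Ioi L))
      (nhds ((1 - L / B) / Real.log (B / L))) ∧
    Qs L = (1 - L / B) / Real.log (B / L) ∧
    ContinuousOn Qs (Set.Ioc 0 B) :=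
  Qstar_is_valid_cdf_general B L hB hL Qs hQs
end

section
/- The functions F* and Q* are valid CDFs: F* is nondecreasing with values in [0, 1], and Q* is nondecreasing on [0, B], takes values in [0, 1], and satisfies Q*(B) = 1. -/
/-! `F*` is a step function continued by the increasing branch `1 - a / v`; its middle value
`1 - 1 / (n - 1)²` is exactly `1 - a / L`, so it is monotone with values in `[0, 1]`.

For `Q*`, put `m = n - 1`, `P = m - 1 / m` and `g r = (r / (r - a)) ^ m * (P + log (r / L))`.
Since `1 - a / B = (B / (B - a))⁻¹`, we have `Q* r = g (max r L) / g B`, so everything reduces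
to the monotonicity of `g` on `[L, ∞)`. The derivative of `g` has the sign of
`r - a - m a (P + log (r / L))`, which for `a = L / m²` is `r - L - (L / m) log (r / L) ≥ 0`
because `log x ≤ x - 1`. -/

open Set Real

section StepCDF

variable {v₀ L B a p : ℝ}

theorem one_sub_div_mem_Icc {v : ℝ} (hL : 0 < L) (ha : 0 ≤ a) (hv : L ≤ v) :
    1 - a / v ∈ Icc (1 - a / L) 1 := by
  constructor
  · gcongr
  · linarith [div_nonneg ha (hL.le.trans hv)]

theorem monotone_stepCDF (hL : 0 < L) (ha : 0 ≤ a) (hp : 0 ≤ p) (hpa : p ≤ 1 - a / L) :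
    Monotone fun v : ℝ => if v < v₀ then 0 else if v < L then p
      else if v < B then 1 - a / v else 1 := by
  have hp1 : p ≤ 1 := hpa.trans (one_sub_div_mem_Icc hL ha le_rfl).2
  intro x y hxy
  dsimp only
  split_ifs <;> first
    | linarith
    | linarith [(one_sub_div_mem_Icc hL ha (not_lt.1 ‹¬y < L›)).1]
    | linarith [(one_sub_div_mem_Icc hL ha (not_lt.1 ‹¬x < L›)).2]
    | have : 0 < x := hL.trans_le (not_lt.1 ‹¬x < L›)
      gcongr

theorem stepCDF_mem_Icc (hL : 0 < L) (ha : 0 ≤ a) (hp : 0 ≤ p) (hpa : p ≤ 1 - a / L) (v : ℝ) :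
    (if v < v₀ then 0 else if v < L then p else if v < B then 1 - a / v else 1) ∈ Icc 0 1 := by
  have hp1 : p ≤ 1 := hpa.trans (one_sub_div_mem_Icc hL ha le_rfl).2
  split_ifs with _ hvL
  · exact ⟨le_rfl, zero_le_one⟩
  · exact ⟨hp, hp1⟩
  · have := one_sub_div_mem_Icc hL ha (not_lt.1 hvL)
    exact ⟨hp.trans (hpa.trans this.1), this.2⟩
  · exact ⟨zero_le_one, le_rfl⟩

end StepCDF

theorem MonotoneOn.monotone_comp_max {α β : Type*} [LinearOrder α] [Preorder β] {g : α → β}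
    {c : α} (hg : MonotoneOn g (Ici c)) : Monotone fun x => g (max x c) :=
  fun _ _ hxy => hg (le_max_right _ c) (le_max_right _ c) (max_le_max_right c hxy)

noncomputable def qProfile (a L P : ℝ) (m : ℕ) (r : ℝ) : ℝ :=
  (r / (r - a)) ^ m * (P + log (r / L))

section QProfile

variable {a L P r : ℝ} {m : ℕ}

theorem hasDerivAt_qProfile (hL : L ≠ 0) (hr : r ≠ 0) (hra : r ≠ a) :
    HasDerivAt (qProfile a L P m)
      (m * (r / (r - a)) ^ (m - 1) * (-a / (r - a) ^ 2) * (P + log (r / L))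
        + (r / (r - a)) ^ m * r⁻¹) r := by
  have hra' : r - a ≠ 0 := sub_ne_zero.2 hra
  have hq : HasDerivAt (fun x => x / (x - a)) (-a / (r - a) ^ 2) r :=
    ((hasDerivAt_id' r).div ((hasDerivAt_id' r).sub_const a) hra').congr_deriv (by ring)
  have hlog : HasDerivAt (fun x => P + log (x / L)) r⁻¹ r :=
    (((hasDerivAt_id' r).div_const L).log (div_ne_zero hr hL)).const_add P
      |>.congr_deriv (by field_simp)
  exact (hq.pow m).mul hlog

theorem qProfile_pos (hP : 0 < P) (hL : 0 < L) (haL : a < L) (hr : L ≤ r) :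
    0 < qProfile a L P m r := by
  have : 0 ≤ log (r / L) := log_nonneg ((one_le_div hL).2 hr)
  have : 0 < r - a := by linarith
  have : 0 < r := by linarith
  unfold qProfile
  positivity

theorem qProfile_max_div_qProfile {B : ℝ} (hL : 0 < L) (haL : a < L) (hLB : L ≤ B) (r : ℝ) :
    qProfile a L P m (max r L) / qProfile a L P m B =
      if r < L then (1 - a / B) ^ m * (L / (L - a)) ^ m * (P / (P + log (B / L)))
      else (1 - a / B) ^ m * (r / (r - a)) ^ m * ((P + log (r / L)) / (P + log (B / L))) := by
  have hinv : 1 - a / B = (B / (B - a))⁻¹ := by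
    have : B - a ≠ 0 := by linarith
    field_simp [(hL.trans_le hLB).ne']
  rw [hinv, inv_pow]
  split_ifs with hr
  · rw [max_eq_right hr.le, qProfile, qProfile, div_mul_eq_div_div, div_self hL.ne', log_one,
      add_zero]
    ring
  · rw [max_eq_left (not_lt.1 hr), qProfile, qProfile, div_mul_eq_div_div]
    ring

theorem monotoneOn_qProfile (hL : 0 < L) (haL : a < L)
    (hslope : ∀ r, L ≤ r → m * a * (P + log (r / L)) ≤ r - a) :
    MonotoneOn (qProfile a L P m) (Ici L) := by
  have hderiv : ∀ r ∈ Ici L, HasDerivAt (qProfile a L P m) _ r := fun r hr =>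
    hasDerivAt_qProfile (P := P) (m := m) hL.ne' (hL.trans_le hr).ne' (haL.trans_le hr).ne'
  refine monotoneOn_of_hasDerivWithinAt_nonneg (convex_Ici L)
    (fun r hr => (hderiv r hr).continuousAt.continuousWithinAt)
    (fun r hr => (hderiv r (interior_subset hr)).hasDerivWithinAt) fun r hr => ?_
  rw [interior_Ici] at hr
  have hr0 : 0 < r := hL.trans hr
  have hra : 0 < r - a := by linarith [mem_Ioi.1 hr]
  rcases m with _ | m
  · simpa using inv_nonneg.2 hr0.le
  · rw [Nat.add_sub_cancel]
    have hderiv_eq : (((m + 1 : ℕ) : ℝ) * (r / (r - a)) ^ m * (-a / (r - a) ^ 2)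
          * (P + log (r / L)) + (r / (r - a)) ^ (m + 1) * r⁻¹)
        = (r / (r - a)) ^ m * ((r - a) - (m + 1 : ℕ) * a * (P + log (r / L))) / (r - a) ^ 2 := by
      have hsucc : (r / (r - a)) ^ (m + 1) * r⁻¹ = (r / (r - a)) ^ m / (r - a) := by
        rw [pow_succ]
        field_simp
      rw [hsucc]
      field_simp
      ring
    rw [hderiv_eq]
    have := hslope r (mem_Ioi.1 hr).le
    have : 0 ≤ (r - a) - (m + 1 : ℕ) * a * (P + log (r / L)) := by linarith
    positivity

theorem monotoneOn_qProfile_of_two_le (hm : 2 ≤ m) (hL : 0 < L) :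
    MonotoneOn (qProfile (L / m ^ 2) L (m - 1 / m) m) (Ici L) := by
  have hm2 : (2 : ℝ) ≤ m := by exact_mod_cast hm
  refine monotoneOn_qProfile hL (div_lt_self hL (by nlinarith)) fun r hr => ?_
  have hlog_nonneg : 0 ≤ log (r / L) := log_nonneg ((one_le_div hL).2 hr)
  have hlog_le : L * log (r / L) ≤ r - L := by
    have := mul_le_mul_of_nonneg_left (log_le_sub_one_of_pos (div_pos (hL.trans_le hr) hL)) hL.le
    rwa [mul_sub, mul_div_cancel₀ r hL.ne', mul_one] at this
  have hexpand : (m : ℝ) * (L / m ^ 2) * (m - 1 / m + log (r / L))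
      = L - L / m ^ 2 + L * log (r / L) / m := by
    field_simp
  have := div_le_self (mul_nonneg hL.le hlog_nonneg) (by linarith : (1 : ℝ) ≤ m)
  linarith

end QProfile

theorem n_bidder_valid_cdfs_general (n : ℕ) (hn : 3 ≤ n) (B L : ℝ)
    (hL : L ∈ Set.Ioc (0 : ℝ) B)
    (v₀ a : ℝ) (ha : a = L / ((n : ℝ) - 1) ^ 2)
    (Fs : ℝ → ℝ)
    (hFs : ∀ v, Fs v = if v < v₀ then 0
      else if v < L then 1 - 1 / ((n : ℝ) - 1) ^ 2
      else if v < B then 1 - a / v else 1)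
    (Qs : ℝ → ℝ)
    (hQs : ∀ r, Qs r = if r < L then
        (1 - a / B) ^ (n - 1) * (L / (L - a)) ^ (n - 1)
          * (((n : ℝ) - 1 - 1 / ((n : ℝ) - 1))
            / ((n : ℝ) - 1 - 1 / ((n : ℝ) - 1) + Real.log (B / L)))
      else (1 - a / B) ^ (n - 1) * (r / (r - a)) ^ (n - 1)
          * (((n : ℝ) - 1 - 1 / ((n : ℝ) - 1) + Real.log (r / L))
            / ((n : ℝ) - 1 - 1 / ((n : ℝ) - 1) + Real.log (B / L)))) :
    Monotone Fs ∧ (∀ v, Fs v ∈ Set.Icc (0 : ℝ) 1) ∧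
    MonotoneOn Qs (Set.Icc 0 B) ∧ (∀ r ∈ Set.Icc (0 : ℝ) B, Qs r ∈ Set.Icc (0 : ℝ) 1) ∧
    Qs B = 1 := by
  obtain ⟨hL0, hLB⟩ := hL
  have hcast : ((n - 1 : ℕ) : ℝ) = n - 1 := by rw [Nat.cast_sub (by omega), Nat.cast_one]
  set m := n - 1
  rw [← hcast] at ha hFs hQs
  have hm : (2 : ℝ) ≤ m := by norm_cast; omega
  have haL : a < L := by rw [ha]; exact div_lt_self hL0 (by nlinarith)
  have ha0 : 0 ≤ a := by rw [ha]; positivity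
  have hp : 0 ≤ 1 - a / L := sub_nonneg.2 ((div_le_one hL0).2 haL.le)
  rw [show 1 / (m : ℝ) ^ 2 = a / L by rw [ha]; field_simp] at hFs
  have hF : Fs = _ := funext hFs
  have hP : 0 < (m : ℝ) - 1 / m := by
    have : 1 / (m : ℝ) ≤ 1 / 2 := one_div_le_one_div_of_le two_pos hm
    linarith
  set g := qProfile a L (m - 1 / m) m
  have hgB : 0 < g B := qProfile_pos hP hL0 haL hLB
  have hQ : Qs = fun r => g (max r L) / g B :=
    funext fun r => (hQs r).trans (qProfile_max_div_qProfile hL0 haL hLB r).symm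
  have hQmono : Monotone Qs := hQ ▸
    (ha ▸ monotoneOn_qProfile_of_two_le (by omega) hL0).monotone_comp_max.div_const hgB.le
  have hQB : Qs B = 1 := by simp only [hQ, max_eq_left hLB, div_self hgB.ne']
  refine ⟨hF ▸ monotone_stepCDF hL0 ha0 hp le_rfl, hF ▸ stepCDF_mem_Icc hL0 ha0 hp le_rfl,
    hQmono.monotoneOn _, fun r hr => ⟨?_, hQB ▸ hQmono hr.2⟩, hQB⟩
  rw [hQ]
  exact div_nonneg (qProfile_pos hP hL0 haL (le_max_right r L)).le hgB.le

/-- For `n ≥ 3` bidders, the candidate equilibrium functions `F*` and `Q*` are valid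
CDFs: `F*` is nondecreasing with values in `[0, 1]`, and `Q*` is nondecreasing on
`[0, B]`, takes values in `[0, 1]` there, and satisfies `Q*(B) = 1`. -/
theorem n_bidder_valid_cdfs (n : ℕ) (hn : 3 ≤ n) (B μ L : ℝ)
    (hB : 0 < B) (hμ0 : 0 < μ) (hμB : μ < B)
    (hL : L ∈ Set.Ioc (0 : ℝ) B)
    (hLeq : ((n : ℝ) - 1 / ((n : ℝ) - 1) + Real.log (B / L)) * L = ((n : ℝ) - 1) ^ 2 * μ)
    (v₀ a : ℝ) (hv₀ : v₀ = L / ((n : ℝ) - 1)) (ha : a = L / ((n : ℝ) - 1) ^ 2)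
    (Fs : ℝ → ℝ)
    (hFs : ∀ v, Fs v = if v < v₀ then 0
      else if v < L then 1 - 1 / ((n : ℝ) - 1) ^ 2
      else if v < B then 1 - a / v else 1)
    (Qs : ℝ → ℝ)
    (hQs : ∀ r, Qs r = if r < L then
        (1 - a / B) ^ (n - 1) * (L / (L - a)) ^ (n - 1)
          * (((n : ℝ) - 1 - 1 / ((n : ℝ) - 1))
            / ((n : ℝ) - 1 - 1 / ((n : ℝ) - 1) + Real.log (B / L)))
      else (1 - a / B) ^ (n - 1) * (r / (r - a)) ^ (n - 1)
          * (((n : ℝ) - 1 - 1 / ((n : ℝ) - 1) + Real.log (r / L))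
            / ((n : ℝ) - 1 - 1 / ((n : ℝ) - 1) + Real.log (B / L)))) :
    Monotone Fs ∧ (∀ v, Fs v ∈ Set.Icc (0 : ℝ) 1) ∧
    MonotoneOn Qs (Set.Icc 0 B) ∧ (∀ r ∈ Set.Icc (0 : ℝ) B, Qs r ∈ Set.Icc (0 : ℝ) 1) ∧
    Qs B = 1 :=
  n_bidder_valid_cdfs_general n hn B L hL v₀ a ha Fs hFs Qs hQs
end

section
/- Let λ = n·(1 − a/B)^{n−1}/(n − 1 − 1/(n−1) + log(B/L)) and, for v ∈ (L, B), define h_v(z) = v·Q*'(v)·(1 − zⁿ) + Q*(v)·(1 − n·z^{n−1} + (n−1)·zⁿ) − λ·(1 − z) for z ∈ ℝ, where Q*' denotes the derivative of Q* on (L, B). Then for every v ∈ (L, B) and every z ∈ [0, 1]: h_v(1 − a/v) ≤ h_v(z). -/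
/-!
Write `m = n - 1`, `s = 1 - a/v`, `T = m - 1/m + log(v/L)` and `c = (1 - a/B)^m / D` with
`D = m - 1/m + log(B/L)`. On `(L, B)` we have `Q*(v) s^m = c T` and
`v Q*'(v) s^(m+1) = c (s - m T (1 - s))`, and with these two identities
`s^(m+1) (h_v(z) - h_v(s)) = c (T G(s, z) - s G(z, s))`, where `G(x, y)` is the gap between
`x^(m+1)` and its tangent line at `y`. Both gaps are `(x - y)^2` times a sum of monomials
with nonnegative coefficients, and comparing coefficients gives `G(z, s) ≤ m G(s, z)`.
So it suffices that `m s ≤ T`, which is `log x ≥ 1 - 1/x` at `x = v/L` together with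
`a = L/m^2`.
-/

open Real Finset Filter Topology

section TangentGap

variable {R : Type*} [CommRing R]

def powTangentGap (m : ℕ) (x y : R) : R :=
  x ^ (m + 1) - (y ^ (m + 1) + (m + 1) * y ^ m * (x - y))

theorem powTangentGap_eq_sq_mul_sum (m : ℕ) (x y : R) :
    powTangentGap m x y
      = (x - y) ^ 2 * ∑ k ∈ range m, ((m : R) - k) * x ^ k * y ^ (m - 1 - k) := by
  induction m with
  | zero => simp [powTangentGap]
  | succ m ih =>
    have hshift : ∀ k ∈ range m,
        ((↑(m + 1) : R) - ↑(k + 1)) * x ^ (k + 1) * y ^ (m + 1 - 1 - (k + 1))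
          = x * (((m : R) - k) * x ^ k * y ^ (m - 1 - k)) := by
      intro k _
      rw [show m + 1 - 1 - (k + 1) = m - 1 - k by omega]
      push_cast
      ring
    rw [sum_range_succ', sum_congr rfl hshift, ← mul_sum, Nat.add_sub_cancel, Nat.sub_zero]
    unfold powTangentGap at ih ⊢
    push_cast
    linear_combination x * ih

theorem powTangentGap_swap_eq_sq_mul_sum (m : ℕ) (x y : R) :
    powTangentGap m y x
      = (x - y) ^ 2 * ∑ k ∈ range m, ((k : R) + 1) * x ^ k * y ^ (m - 1 - k) := by
  rw [powTangentGap_eq_sq_mul_sum, ← sum_range_reflect, show (y - x) ^ 2 = (x - y) ^ 2 by ring]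
  congr 1
  refine sum_congr rfl fun k hk => ?_
  have hk : k < m := mem_range.1 hk
  rw [show m - 1 - (m - 1 - k) = k by omega, Nat.sub_sub, Nat.cast_sub (by omega)]
  push_cast
  ring

variable [LinearOrder R] [IsStrictOrderedRing R]

theorem powTangentGap_nonneg (m : ℕ) {x y : R} (hx : 0 ≤ x) (hy : 0 ≤ y) :
    0 ≤ powTangentGap m x y := by
  rw [powTangentGap_eq_sq_mul_sum]
  refine mul_nonneg (sq_nonneg _) (sum_nonneg fun k hk => ?_)
  have hk : (k : R) ≤ m := by exact_mod_cast (mem_range.1 hk).le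
  exact mul_nonneg (mul_nonneg (sub_nonneg.2 hk) (pow_nonneg hx _)) (pow_nonneg hy _)

theorem powTangentGap_le_mul_swap (m : ℕ) {x y : R} (hx : 0 ≤ x) (hy : 0 ≤ y) :
    powTangentGap m x y ≤ m * powTangentGap m y x := by
  rw [powTangentGap_eq_sq_mul_sum, powTangentGap_swap_eq_sq_mul_sum, mul_left_comm]
  refine mul_le_mul_of_nonneg_left ?_ (sq_nonneg _)
  rw [mul_sum]
  refine sum_le_sum fun k _ => ?_
  have hw : 0 ≤ x ^ k * y ^ (m - 1 - k) := by positivity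
  have hcoef : (m : R) - k ≤ m * (k + 1) := by
    have hm0 : (0 : R) ≤ m := Nat.cast_nonneg m
    have hk0 : (0 : R) ≤ k := Nat.cast_nonneg k
    nlinarith [mul_nonneg hm0 hk0]
  calc ((m : R) - k) * x ^ k * y ^ (m - 1 - k)
        = ((m : R) - k) * (x ^ k * y ^ (m - 1 - k)) := by ring
    _ ≤ (m * (k + 1)) * (x ^ k * y ^ (m - 1 - k)) := mul_le_mul_of_nonneg_right hcoef hw
    _ = m * ((k + 1) * x ^ k * y ^ (m - 1 - k)) := by ring

end TangentGap

def lagrangianIntegrand (n : ℕ) (A Q lam z : ℝ) : ℝ :=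
  A * (1 - z ^ n) + Q * (1 - (n : ℝ) * z ^ (n - 1) + ((n : ℝ) - 1) * z ^ n) - lam * (1 - z)

theorem lagrangianIntegrand_le (m : ℕ) {s z c T A Q lam : ℝ} (hs : 0 < s) (hz : 0 ≤ z)
    (hc : 0 ≤ c) (hT : m * s ≤ T) (hA : A * s ^ (m + 1) = c * (s - m * T * (1 - s)))
    (hQ : Q * s ^ m = c * T) (hlam : lam = (m + 1 : ℕ) * c) :
    lagrangianIntegrand (m + 1) A Q lam s ≤ lagrangianIntegrand (m + 1) A Q lam z := by
  have hdiff : s ^ (m + 1) * (lagrangianIntegrand (m + 1) A Q lam z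
      - lagrangianIntegrand (m + 1) A Q lam s)
      = c * (T * powTangentGap m s z - s * powTangentGap m z s) := by
    simp only [lagrangianIntegrand, powTangentGap, Nat.add_sub_cancel, hlam]
    push_cast
    linear_combination (s ^ (m + 1) - z ^ (m + 1)) * hA
      + (s * ((m + 1) * (s ^ m - z ^ m) + m * (z ^ (m + 1) - s ^ (m + 1)))) * hQ
  have hgap : s * powTangentGap m z s ≤ T * powTangentGap m s z :=
    calc s * powTangentGap m z s ≤ s * (m * powTangentGap m s z) :=
          mul_le_mul_of_nonneg_left (powTangentGap_le_mul_swap m hz hs.le) hs.le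
      _ = (m * s) * powTangentGap m s z := by ring
      _ ≤ T * powTangentGap m s z :=
          mul_le_mul_of_nonneg_right hT (powTangentGap_nonneg m hs.le hz)
  have h0 : 0 ≤ s ^ (m + 1) * (lagrangianIntegrand (m + 1) A Q lam z
      - lagrangianIntegrand (m + 1) A Q lam s) :=
    hdiff ▸ mul_nonneg hc (sub_nonneg.2 hgap)
  exact sub_nonneg.1 (nonneg_of_mul_nonneg_right h0 (pow_pos hs _))

theorem hasDerivAt_div_sub_pow_mul_add_log (m : ℕ) {a K L v : ℝ} (hL : 0 < L) (hv : 0 < v)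
    (hav : a < v) :
    HasDerivAt (fun r => (r / (r - a)) ^ m * (K + log (r / L)))
      ((v / (v - a)) ^ (m + 1) / v * (1 - a / v - m * (K + log (v / L)) * (a / v))) v := by
  have hva : v - a ≠ 0 := (sub_pos.2 hav).ne'
  have hpow := ((hasDerivAt_id' v).fun_div ((hasDerivAt_id' v).sub_const a) hva).fun_pow m
  have hlog := (((hasDerivAt_id' v).div_const L).log (div_pos hv hL).ne').const_add K
  refine (hpow.fun_mul hlog).congr_deriv ?_
  rcases m with _ | m
  · simp only [Nat.cast_zero, zero_mul, pow_zero, pow_one, zero_add, one_mul, sub_zero]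
    field_simp
  · rw [Nat.add_sub_cancel, div_pow, div_pow, div_pow]
    field_simp
    ring

section UpperBranch

variable (m : ℕ) {f : ℝ → ℝ} {a c K L v : ℝ}

theorem div_sub_pow_mul_one_sub_div_pow (hv : 0 < v) (hav : a < v) :
    (v / (v - a)) ^ m * (1 - a / v) ^ m = 1 := by
  have hva : v - a ≠ 0 := (sub_pos.2 hav).ne'
  rw [← mul_pow, show v / (v - a) * (1 - a / v) = 1 by field_simp, one_pow]

theorem mul_deriv_mul_one_sub_div_pow (hL : 0 < L) (hv : 0 < v) (hav : a < v)
    (hf : f =ᶠ[𝓝 v] fun r => c * ((r / (r - a)) ^ m * (K + log (r / L)))) :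
    v * deriv f v * (1 - a / v) ^ (m + 1)
      = c * ((1 - a / v) - m * (K + log (v / L)) * (1 - (1 - a / v))) := by
  rw [((hasDerivAt_div_sub_pow_mul_add_log m hL hv hav).const_mul c).congr_of_eventuallyEq hf
    |>.deriv]
  have hvX : v * ((v / (v - a)) ^ (m + 1) / v) = (v / (v - a)) ^ (m + 1) :=
    mul_div_cancel₀ _ hv.ne'
  linear_combination (c * (1 - a / v - m * (K + log (v / L)) * (a / v)))
      * div_sub_pow_mul_one_sub_div_pow (m + 1) hv hav
    + (c * (1 - a / v - m * (K + log (v / L)) * (a / v)) * (1 - a / v) ^ (m + 1)) * hvX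

theorem apply_mul_one_sub_div_pow (hv : 0 < v) (hav : a < v)
    (hf : f =ᶠ[𝓝 v] fun r => c * ((r / (r - a)) ^ m * (K + log (r / L)))) :
    f v * (1 - a / v) ^ m = c * (K + log (v / L)) := by
  rw [hf.eq_of_nhds]
  linear_combination (c * (K + log (v / L))) * div_sub_pow_mul_one_sub_div_pow m hv hav

end UpperBranch

theorem one_sub_div_mul_le_sub_inv_add_log {m L v : ℝ} (hm : 1 ≤ m) (hL : 0 < L)
    (hLv : L ≤ v) :
    m * (1 - L / m ^ 2 / v) ≤ m - 1 / m + log (v / L) := by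
  have hlog : 1 - L / v ≤ log (v / L) := by
    simpa only [inv_div] using one_sub_inv_le_log_of_pos (div_pos (hL.trans_le hLv) hL)
  have hsplit : m * (1 - L / m ^ 2 / v) = m - 1 / m + (1 - L / v) - (1 - 1 / m) * (1 - L / v) := by
    field_simp
    ring
  have hprod : 0 ≤ (1 - 1 / m) * (1 - L / v) :=
    mul_nonneg (sub_nonneg.2 ((div_le_one (by linarith)).2 hm))
      (sub_nonneg.2 ((div_le_one (hL.trans_le hLv)).2 hLv))
  linarith

theorem lagrangian_integrand_min_n_bidders_general (n : ℕ) (hn : 3 ≤ n) (B L : ℝ)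
    (hL : L ∈ Set.Ioc (0 : ℝ) B)
    (a : ℝ) (ha : a = L / ((n : ℝ) - 1) ^ 2)
    (Qs : ℝ → ℝ)
    (hQs : ∀ r, Qs r = if r < L then
        (1 - a / B) ^ (n - 1) * (L / (L - a)) ^ (n - 1)
          * (((n : ℝ) - 1 - 1 / ((n : ℝ) - 1))
            / ((n : ℝ) - 1 - 1 / ((n : ℝ) - 1) + Real.log (B / L)))
      else (1 - a / B) ^ (n - 1) * (r / (r - a)) ^ (n - 1)
          * (((n : ℝ) - 1 - 1 / ((n : ℝ) - 1) + Real.log (r / L))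
            / ((n : ℝ) - 1 - 1 / ((n : ℝ) - 1) + Real.log (B / L))))
    (lam : ℝ)
    (hlam : lam = (n : ℝ) * (1 - a / B) ^ (n - 1)
      / ((n : ℝ) - 1 - 1 / ((n : ℝ) - 1) + Real.log (B / L)))
    (h : ℝ → ℝ → ℝ)
    (hh : ∀ v z, h v z = v * deriv Qs v * (1 - z ^ n)
      + Qs v * (1 - (n : ℝ) * z ^ (n - 1) + ((n : ℝ) - 1) * z ^ n) - lam * (1 - z)) :
    ∀ v ∈ Set.Ioo L B, ∀ z ∈ Set.Icc (0 : ℝ) 1, h v (1 - a / v) ≤ h v z := by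
  obtain ⟨m, rfl⟩ : ∃ m, n = m + 1 := ⟨n - 1, by omega⟩
  have hm : ((m + 1 : ℕ) : ℝ) - 1 = m := by push_cast; ring
  have hm1 : (1 : ℝ) ≤ m := by exact_mod_cast (show 1 ≤ m by omega)
  simp only [hm, Nat.add_sub_cancel] at ha hQs hlam
  rintro v ⟨hLv, -⟩ z ⟨hz, -⟩
  obtain ⟨hL0, hLB⟩ := hL
  have haL : a ≤ L := ha ▸ div_le_self hL0.le (one_le_pow₀ hm1)
  have hav : a < v := haL.trans_lt hLv
  have hv0 : 0 < v := hL0.trans hLv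
  have hD : 0 ≤ (m : ℝ) - 1 / m + log (B / L) := by
    have : 1 / (m : ℝ) ≤ 1 := (div_le_one₀ (by linarith)).2 hm1
    linarith [log_nonneg ((one_le_div₀ hL0).2 hLB)]
  have hc : 0 ≤ (1 - a / B) ^ m / ((m : ℝ) - 1 / m + log (B / L)) :=
    div_nonneg (pow_nonneg (sub_nonneg.2 ((div_le_one₀ (hL0.trans_le hLB)).2 (haL.trans hLB))) _)
      hD
  have hQs_near : Qs =ᶠ[𝓝 v] fun r => (1 - a / B) ^ m / ((m : ℝ) - 1 / m + log (B / L))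
      * ((r / (r - a)) ^ m * (m - 1 / m + log (r / L))) := by
    filter_upwards [Ioi_mem_nhds hLv] with r hr
    rw [hQs, if_neg (not_lt.2 hr.le)]
    ring
  rw [hh, hh]
  exact lagrangianIntegrand_le m (sub_pos.2 ((div_lt_one hv0).2 hav)) hz hc
    (ha ▸ one_sub_div_mul_le_sub_inv_add_log hm1 hL0 hLv.le)
    (mul_deriv_mul_one_sub_div_pow m hL0 hv0 hav hQs_near)
    (apply_mul_one_sub_div_pow m hv0 hav hQs_near) (by rw [hlam, mul_div_assoc])

/-- Pointwise minimization of the Lagrangian integrand in the `n`-bidder game: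
with `λ = n(1 - a/B)^{n-1}/(n - 1 - 1/(n-1) + log(B/L))` and
`h_v(z) = v·Q*'(v)·(1 - zⁿ) + Q*(v)·(1 - n z^{n-1} + (n-1) zⁿ) - λ(1 - z)`,
for every `v ∈ (L, B)` the choice `z = 1 - a/v` minimizes `h_v` over `z ∈ [0, 1]`. -/
theorem lagrangian_integrand_min_n_bidders (n : ℕ) (hn : 3 ≤ n) (B μ L : ℝ)
    (hB : 0 < B) (hμ0 : 0 < μ) (hμB : μ < B)
    (hL : L ∈ Set.Ioc (0 : ℝ) B)
    (hLeq : ((n : ℝ) - 1 / ((n : ℝ) - 1) + Real.log (B / L)) * L = ((n : ℝ) - 1) ^ 2 * μ)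
    (v₀ a : ℝ) (hv₀ : v₀ = L / ((n : ℝ) - 1)) (ha : a = L / ((n : ℝ) - 1) ^ 2)
    (Qs : ℝ → ℝ)
    (hQs : ∀ r, Qs r = if r < L then
        (1 - a / B) ^ (n - 1) * (L / (L - a)) ^ (n - 1)
          * (((n : ℝ) - 1 - 1 / ((n : ℝ) - 1))
            / ((n : ℝ) - 1 - 1 / ((n : ℝ) - 1) + Real.log (B / L)))
      else (1 - a / B) ^ (n - 1) * (r / (r - a)) ^ (n - 1)
          * (((n : ℝ) - 1 - 1 / ((n : ℝ) - 1) + Real.log (r / L))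
            / ((n : ℝ) - 1 - 1 / ((n : ℝ) - 1) + Real.log (B / L))))
    (lam : ℝ)
    (hlam : lam = (n : ℝ) * (1 - a / B) ^ (n - 1)
      / ((n : ℝ) - 1 - 1 / ((n : ℝ) - 1) + Real.log (B / L)))
    (h : ℝ → ℝ → ℝ)
    (hh : ∀ v z, h v z = v * deriv Qs v * (1 - z ^ n)
      + Qs v * (1 - (n : ℝ) * z ^ (n - 1) + ((n : ℝ) - 1) * z ^ n) - lam * (1 - z)) :
    ∀ v ∈ Set.Ioo L B, ∀ z ∈ Set.Icc (0 : ℝ) 1, h v (1 - a / v) ≤ h v z :=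
  lagrangian_integrand_min_n_bidders_general n hn B L hL a ha Qs hQs lam hlam h hh
end

section
/- Rev_{F*}(0) = B·(1 − (1 − v₀/B)·(1 + 1/(n−1))·p^{n−1}), and Rev_{F*}(0) ≥ B·(1 − pⁿ) if and only if (n−1)²·μ ≥ B·(n − 1/(n−1)). -/
/-- The `n`-bidder second-price revenue with reserve `r` against the CDF `F`,
truncated at the upper bound `B`. -/
noncomputable def nRev (n : ℕ) (B : ℝ) (F : ℝ → ℝ) (r : ℝ) : ℝ :=
  r * (1 - (F r) ^ n)
    + ∫ t in r..B, (1 - (n : ℝ) * (F t) ^ (n - 1) + ((n : ℝ) - 1) * (F t) ^ n)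

/-!
On `[0, v₀)` the CDF vanishes and the revenue integrand is `1`; on `[v₀, B)` it is the constant
`1 - n pⁿ⁻¹ + (n - 1) pⁿ`. With `k = n - 1` and `p = 1 - 1/k²` that constant is
`1 - (1 + 1/k) pⁿ⁻¹`, so `Rev(0) = B - (B - v₀)(1 + 1/k) pⁿ⁻¹`. Subtracting `B(1 - pⁿ)` leaves
`pⁿ⁻¹ (k² μ - B (n - 1/k)) / (k (k - 1))`, whose sign is that of `k² μ - B (n - 1/k)`.
-/

open MeasureTheory Set
open scoped Interval

section StepIntegral

variable {f : ℝ → ℝ} {a b c : ℝ}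

theorem ae_restrict_uIoc_eq_const_of_eqOn_Ico (hab : a ≤ b) (h : EqOn f (fun _ => c) (Ico a b)) :
    f =ᵐ[volume.restrict (Ι a b)] fun _ => c := by
  rw [uIoc_of_le hab, ← Measure.restrict_congr_set Ico_ae_eq_Ioc]
  exact (ae_restrict_mem measurableSet_Ico).mono h

theorem intervalIntegrable_of_eqOn_Ico (hab : a ≤ b) (h : EqOn f (fun _ => c) (Ico a b)) :
    IntervalIntegrable f volume a b :=
  intervalIntegrable_const.congr_ae (ae_restrict_uIoc_eq_const_of_eqOn_Ico hab h).symm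

theorem integral_eq_of_eqOn_Ico (hab : a ≤ b) (h : EqOn f (fun _ => c) (Ico a b)) :
    ∫ t in a..b, f t = (b - a) * c := by
  rw [intervalIntegral.integral_congr_ae
    ((ae_restrict_iff' measurableSet_uIoc).1 (ae_restrict_uIoc_eq_const_of_eqOn_Ico hab h))]
  simp

end StepIntegral

theorem nRev_zero_of_eqOn_Ico {n : ℕ} (hn : 2 ≤ n) {F : ℝ → ℝ} {a b p : ℝ} (ha : 0 ≤ a)
    (hab : a ≤ b) (hF₀ : EqOn F (fun _ => 0) (Ico 0 a))
    (hFp : EqOn F (fun _ => p) (Ico a b)) :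
    nRev n b F 0 = a + (b - a) * (1 - n * p ^ (n - 1) + (n - 1) * p ^ n) := by
  set g : ℝ → ℝ := fun x => 1 - n * x ^ (n - 1) + (n - 1) * x ^ n
  have hg₀ : EqOn (g ∘ F) (fun _ => 1) (Ico 0 a) := fun t ht => by
    simp [g, hF₀ ht, zero_pow (by omega : n - 1 ≠ 0), zero_pow (by omega : n ≠ 0)]
  have hgp : EqOn (g ∘ F) (fun _ => g p) (Ico a b) := fun t ht => by simp [hFp ht]
  change 0 * (1 - F 0 ^ n) + ∫ t in 0..b, (g ∘ F) t = _
  rw [← intervalIntegral.integral_add_adjacent_intervals (intervalIntegrable_of_eqOn_Ico ha hg₀)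
    (intervalIntegrable_of_eqOn_Ico hab hgp), integral_eq_of_eqOn_Ico ha hg₀,
    integral_eq_of_eqOn_Ico hab hgp]
  ring

theorem two_point_gap_eq {k : ℝ} (hk : 1 < k) (B μ q : ℝ) :
    B - (B - (μ - (B - μ) / (k ^ 2 - 1))) * (1 + 1 / k) * q - B * (1 - q * (1 - 1 / k ^ 2))
      = q * ((k ^ 2 * μ - B * (k + 1 - 1 / k)) / (k * (k - 1))) := by
  have : k ^ 2 - 1 ≠ 0 := by nlinarith
  have : k - 1 ≠ 0 := by linarith
  field_simp
  ring

theorem two_point_revenue_general (n : ℕ) (hn : 3 ≤ n) (B μ : ℝ)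
    (hB : 0 < B) (hμB : μ < B) (hBμ : ((n : ℝ) - 1) ^ 2 * μ ≥ B)
    (p v₀ : ℝ) (hp : p = 1 - 1 / ((n : ℝ) - 1) ^ 2)
    (hv₀ : v₀ = μ - (B - μ) / (((n : ℝ) - 1) ^ 2 - 1))
    (Fs : ℝ → ℝ)
    (hFs : ∀ v, Fs v = if v < v₀ then 0 else if v < B then p else 1) :
    nRev n B Fs 0 = B * (1 - (1 - v₀ / B) * (1 + 1 / ((n : ℝ) - 1)) * p ^ (n - 1)) ∧
    (nRev n B Fs 0 ≥ B * (1 - p ^ n) ↔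
      ((n : ℝ) - 1) ^ 2 * μ ≥ B * ((n : ℝ) - 1 / ((n : ℝ) - 1))) := by
  have hk : (2 : ℝ) ≤ n - 1 := by rw [le_sub_iff_add_le]; exact_mod_cast hn
  have hD : 0 < ((n : ℝ) - 1) ^ 2 - 1 := by nlinarith
  have hv₀_nonneg : 0 ≤ v₀ := by rw [hv₀, sub_nonneg, div_le_iff₀ hD]; nlinarith
  have hv₀B : v₀ ≤ B := by rw [hv₀]; linarith [div_pos (sub_pos.2 hμB) hD]
  have hp_pos : 0 < p := by rw [hp, sub_pos, div_lt_one (by positivity)]; nlinarith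
  have hrev : nRev n B Fs 0 = B - (B - v₀) * (1 + 1 / ((n : ℝ) - 1)) * p ^ (n - 1) := by
    rw [nRev_zero_of_eqOn_Ico (by omega) hv₀_nonneg hv₀B (fun t ht => by rw [hFs, if_pos ht.2])
      (fun t ht => by rw [hFs, if_neg ht.1.not_gt, if_pos ht.2]),
      ← pow_sub_one_mul (by omega : n ≠ 0), hp]
    field_simp
    ring
  constructor
  · rw [hrev]
    field_simp
  · rw [ge_iff_le, ← sub_nonneg, hrev, ← pow_sub_one_mul (by omega : n ≠ 0), hp, hv₀,
      two_point_gap_eq (by linarith), ← hp, mul_nonneg_iff_of_pos_left (pow_pos hp_pos _),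
      le_div_iff₀ (by nlinarith), zero_mul, sub_nonneg, sub_add_cancel]

/-- For the two-point worst-case distribution (value `v₀` with probability
`p = 1 - 1/(n-1)²` and value `B` with probability `1 - p`): the revenue of a second-price
auction with no reserve is `B(1 - (1 - v₀/B)(1 + 1/(n-1))p^{n-1})`, and it is at least
the revenue `B(1 - pⁿ)` of posting price `B` iff `(n-1)²μ ≥ B(n - 1/(n-1))`. -/
theorem two_point_revenue (n : ℕ) (hn : 3 ≤ n) (B μ : ℝ)
    (hB : 0 < B) (hμ0 : 0 < μ) (hμB : μ < B) (hBμ : ((n : ℝ) - 1) ^ 2 * μ ≥ B)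
    (p v₀ : ℝ) (hp : p = 1 - 1 / ((n : ℝ) - 1) ^ 2)
    (hv₀ : v₀ = μ - (B - μ) / (((n : ℝ) - 1) ^ 2 - 1))
    (Fs : ℝ → ℝ)
    (hFs : ∀ v, Fs v = if v < v₀ then 0 else if v < B then p else 1) :
    nRev n B Fs 0 = B * (1 - (1 - v₀ / B) * (1 + 1 / ((n : ℝ) - 1)) * p ^ (n - 1)) ∧
    (nRev n B Fs 0 ≥ B * (1 - p ^ n) ↔
      ((n : ℝ) - 1) ^ 2 * μ ≥ B * ((n : ℝ) - 1 / ((n : ℝ) - 1))) :=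
  two_point_revenue_general n hn B μ hB hμB hBμ p v₀ hp hv₀ Fs hFs
end

section
/- For every x ∈ [0,1]^k, every q ∈ ℝ^k, and every index 1 ≤ i ≤ k−1: ∂𝓛_k/∂q_i(q, x) = 0 if and only if x_{i+1} = √((B/k)·(2/(r_i + B/k))·(x_i − x_i²) + x_i²). -/
/-- The discrete two-bidder Lagrangian on the grid `r_i = (i-1)·B/k`, `1 ≤ i ≤ k`,
with the convention `q 0 = 0`:
`𝓛_k(q, x) = Σ (q_i - q_{i-1}) r_i (1 - x_i²) + (B/k) Σ q_i (1 - x_i)² - λ (B/k) Σ (1 - x_i)`. -/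
noncomputable def discreteLag (B lam : ℝ) (k : ℕ) (q x : ℕ → ℝ) : ℝ :=
  (∑ i ∈ Finset.Icc 1 k, (q i - q (i - 1)) * (((i : ℝ) - 1) * B / k) * (1 - x i ^ 2))
    + (B / k) * (∑ i ∈ Finset.Icc 1 k, q i * (1 - x i) ^ 2)
    - lam * (B / k) * (∑ i ∈ Finset.Icc 1 k, (1 - x i))

/-! The Lagrangian is affine in each `q_i`, so its partial derivative does not depend on `q`; only
the terms `j = i` and `j = i + 1` of the first sum and the term `j = i` of the second contribute.
The first-order condition then reads `(r_i + B/k) (x_{i+1}² - A) = 0` with `A` the radicand, and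
`x_{i+1} ≥ 0` turns `x_{i+1}² = A` into `x_{i+1} = √A`. -/

open Finset

theorem hasDerivAt_update_apply {ι 𝕜 : Type*} [DecidableEq ι] [NontriviallyNormedField 𝕜]
    (q : ι → 𝕜) (i j : ι) (t : 𝕜) :
    HasDerivAt (fun s => Function.update q i s j) (if j = i then 1 else 0) t := by
  rcases eq_or_ne j i with rfl | hji
  · simpa using hasDerivAt_id' t
  · simpa [Function.update_of_ne hji, hji] using hasDerivAt_const t (q j)

theorem hasDerivAt_discreteLag_update (B lam : ℝ) (k : ℕ) (q x : ℕ → ℝ) (i : ℕ) (t : ℝ) :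
    HasDerivAt (fun s => discreteLag B lam k (Function.update q i s) x)
      ((∑ j ∈ Icc 1 k, ((if j = i then 1 else 0) - (if j - 1 = i then 1 else 0))
          * (((j : ℝ) - 1) * B / k) * (1 - x j ^ 2))
        + (B / k) * ∑ j ∈ Icc 1 k, (if j = i then 1 else 0) * (1 - x j) ^ 2) t := by
  unfold discreteLag
  refine ((HasDerivAt.fun_sum fun j _ => ?_).add
    ((HasDerivAt.fun_sum fun j _ => ?_).const_mul _)).sub_const _
  · exact (((hasDerivAt_update_apply q i j t).sub
      (hasDerivAt_update_apply q i (j - 1) t)).mul_const _).mul_const _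
  · exact (hasDerivAt_update_apply q i j t).mul_const _

theorem deriv_discreteLag_update (B lam : ℝ) (k : ℕ) (q x : ℕ → ℝ) {i : ℕ} (hi1 : 1 ≤ i)
    (hik : i + 1 ≤ k) (t : ℝ) :
    deriv (fun s => discreteLag B lam k (Function.update q i s) x) t =
      (((i : ℝ) - 1) * B / k) * (1 - x i ^ 2)
        - ((((i : ℝ) - 1) * B / k) + B / k) * (1 - x (i + 1) ^ 2) + (B / k) * (1 - x i) ^ 2 := by
  rw [(hasDerivAt_discreteLag_update B lam k q x i t).deriv]
  have hi : i ∈ Icc 1 k := mem_Icc.mpr ⟨hi1, by omega⟩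
  have hi' : i + 1 ∈ Icc 1 k := mem_Icc.mpr ⟨by omega, hik⟩
  have hself (f : ℕ → ℝ) : ∑ j ∈ Icc 1 k, (if j = i then 1 else 0) * f j = f i := by
    simp [hi]
  have hnext (f : ℕ → ℝ) : ∑ j ∈ Icc 1 k, (if j - 1 = i then 1 else 0) * f j = f (i + 1) := by
    calc _ = ∑ j ∈ Icc 1 k, (if j = i + 1 then 1 else 0) * f j :=
          sum_congr rfl fun j hj => by simp only [show j - 1 = i ↔ j = i + 1 by grind]
      _ = f (i + 1) := by simp [hi']
  simp only [sub_mul, mul_assoc, sum_sub_distrib, hself, hnext]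
  push_cast
  ring

theorem foc_eq_zero_iff_eq_sqrt {r h a b : ℝ} (hr : 0 ≤ r) (hh : 0 < h) (ha : a ∈ Set.Icc 0 1)
    (hb : 0 ≤ b) :
    r * (1 - a ^ 2) - (r + h) * (1 - b ^ 2) + h * (1 - a) ^ 2 = 0 ↔
      b = √(h * (2 / (r + h)) * (a - a ^ 2) + a ^ 2) := by
  have hc : 0 < r + h := by positivity
  have hA : 0 ≤ h * (2 / (r + h)) * (a - a ^ 2) + a ^ 2 := by
    have : 0 ≤ a - a ^ 2 := by nlinarith [ha.1, ha.2]
    exact add_nonneg (mul_nonneg (by positivity) this) (sq_nonneg a)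
  have key : r * (1 - a ^ 2) - (r + h) * (1 - b ^ 2) + h * (1 - a) ^ 2
      = (r + h) * (b ^ 2 - (h * (2 / (r + h)) * (a - a ^ 2) + a ^ 2)) := by
    field_simp
    ring
  rw [key, mul_eq_zero, or_iff_right hc.ne', sub_eq_zero, eq_comm (a := b),
    Real.sqrt_eq_iff_eq_sq hA hb]
  exact eq_comm

theorem discrete_foc_q_general (B lam : ℝ) (hB : 0 < B) (k : ℕ)
    (x q : ℕ → ℝ)
    (hx : ∀ i ∈ Finset.Icc 1 k, x i ∈ Set.Icc (0 : ℝ) 1)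
    (i : ℕ) (hi1 : 1 ≤ i) (hik : i ≤ k - 1) :
    deriv (fun t => discreteLag B lam k (Function.update q i t) x) (q i) = 0 ↔
      x (i + 1) = Real.sqrt
        ((B / k) * (2 / ((((i : ℝ) - 1) * B / k) + B / k)) * (x i - x i ^ 2) + x i ^ 2) := by
  have hk : (0 : ℝ) < k := by exact_mod_cast (by omega : 0 < k)
  have hr : 0 ≤ ((i : ℝ) - 1) * B / k :=
    div_nonneg (mul_nonneg (sub_nonneg.mpr (by exact_mod_cast hi1)) hB.le) hk.le
  rw [deriv_discreteLag_update B lam k q x hi1 (by omega)]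
  exact foc_eq_zero_iff_eq_sqrt hr (div_pos hB hk) (hx i (mem_Icc.mpr ⟨hi1, by omega⟩))
    (hx (i + 1) (mem_Icc.mpr ⟨by omega, by omega⟩)).1

/-- First-order condition in `q_i` for the discrete two-bidder Lagrangian: for
`x ∈ [0,1]^k`, `q ∈ ℝ^k` (with `q 0 = 0`) and `1 ≤ i ≤ k - 1`,
`∂𝓛_k/∂q_i(q, x) = 0` iff `x_{i+1} = √((B/k)·(2/(r_i + B/k))·(x_i - x_i²) + x_i²)`. -/
theorem discrete_foc_q (B lam : ℝ) (hB : 0 < B) (k : ℕ) (hk : 1 < k)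
    (x q : ℕ → ℝ) (hq0 : q 0 = 0)
    (hx : ∀ i ∈ Finset.Icc 1 k, x i ∈ Set.Icc (0 : ℝ) 1)
    (i : ℕ) (hi1 : 1 ≤ i) (hik : i ≤ k - 1) :
    deriv (fun t => discreteLag B lam k (Function.update q i t) x) (q i) = 0 ↔
      x (i + 1) = Real.sqrt
        ((B / k) * (2 / ((((i : ℝ) - 1) * B / k) + B / k)) * (x i - x i ^ 2) + x i ^ 2) :=
  discrete_foc_q_general B lam hB k x q hx i hi1 hik
end

section
/- There exists a unique vector x = (x_1, …, x_k) ∈ ℝ^k such that: (a) x_{i+1} = √((B/k)·(2/(r_i + B/k))·(x_i − x_i²) + x_i²) for every 1 ≤ i ≤ k−1; (b) (B/k)·Σ_{i=1}^k (1 − x_i) = μ; and (c) 0 < x_1 < x_2 < ⋯ < x_k < 1. -/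
noncomputable def gg : ℕ → ℝ → ℝ
  | 0, t => t
  | (i+1), t => Real.sqrt ((2/((i:ℝ)+1)) * (gg i t - (gg i t)^2) + (gg i t)^2)

lemma cc_pos (i : ℕ) : (0:ℝ) < 2/((i:ℝ)+1) := by positivity

lemma cc_le_two (i : ℕ) : 2/((i:ℝ)+1) ≤ 2 := by
  have h : (1:ℝ) ≤ (i:ℝ)+1 := by
    have := Nat.cast_nonneg (α:=ℝ) i; linarith
  calc 2/((i:ℝ)+1) ≤ 2/1 := by
        apply div_le_div_of_nonneg_left (by norm_num) (by norm_num) h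
    _ = 2 := by norm_num

lemma gg_nonneg (i : ℕ) (t : ℝ) (ht : 0 ≤ t) : 0 ≤ gg i t := by
  cases i with
  | zero => exact ht
  | succ n => exact Real.sqrt_nonneg _

lemma gg_le_one (i : ℕ) (t : ℝ) (ht0 : 0 ≤ t) (ht1 : t ≤ 1) : gg i t ≤ 1 := by
  induction i with
  | zero => exact ht1
  | succ n ih =>
    have hy0 := gg_nonneg n t ht0
    set y := gg n t
    have hc0 := cc_pos n
    have hc2 := cc_le_two n
    set c := 2/((n:ℝ)+1)
    show Real.sqrt (c*(y - y^2) + y^2) ≤ 1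
    rw [show (1:ℝ) = Real.sqrt 1 by simp]
    apply Real.sqrt_le_sqrt
    nlinarith [mul_nonneg (sub_nonneg.2 ih) (show (0:ℝ) ≤ 1 + (1-c)*y by nlinarith)]

lemma gg_strictMonoOn (i : ℕ) : StrictMonoOn (gg i) (Set.Icc 0 1) := by
  induction i with
  | zero => exact fun a _ b _ h => h
  | succ n ih =>
    intro y hy z hz hyz
    have hab := ih hy hz hyz
    have ha0 := gg_nonneg n y hy.1
    have hb0 := gg_nonneg n z hz.1
    have ha1 := gg_le_one n y hy.1 hy.2
    have hb1 := gg_le_one n z hz.1 hz.2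
    set a := gg n y
    set b := gg n z
    have hc0 := cc_pos n
    have hc2 := cc_le_two n
    set c := 2/((n:ℝ)+1)
    show Real.sqrt (c*(a - a^2) + a^2) < Real.sqrt (c*(b - b^2) + b^2)
    apply Real.sqrt_lt_sqrt
    · nlinarith [mul_nonneg (mul_nonneg hc0.le ha0) (sub_nonneg.2 ha1)]
    · nlinarith [mul_pos (sub_pos.2 hab) hc0, mul_nonneg (sub_pos.2 hab).le (add_nonneg ha0 hb0),
        mul_pos (sub_pos.2 hab) (show (0:ℝ) < 2 - (a+b) by nlinarith)]

lemma gg_continuous (i : ℕ) : Continuous (gg i) := by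
  induction i with
  | zero => exact continuous_id
  | succ n ih =>
    exact (((continuous_const.mul (ih.sub (ih.pow 2))).add (ih.pow 2))).sqrt

lemma gg_zero (i : ℕ) : gg i 0 = 0 := by
  induction i with
  | zero => rfl
  | succ n ih => simp [gg, ih]

lemma gg_one (i : ℕ) : gg i 1 = 1 := by
  induction i with
  | zero => rfl
  | succ n ih => simp [gg, ih]

lemma gg_pos (i : ℕ) (t : ℝ) (ht : 0 < t) (ht1 : t ≤ 1) : 0 < gg i t := by
  have := gg_strictMonoOn i (Set.mem_Icc.2 ⟨le_refl 0, zero_le_one⟩)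
    (Set.mem_Icc.2 ⟨ht.le, ht1⟩) ht
  rwa [gg_zero] at this

lemma gg_lt_one (i : ℕ) (t : ℝ) (ht : 0 ≤ t) (ht1 : t < 1) : gg i t < 1 := by
  have := gg_strictMonoOn i (Set.mem_Icc.2 ⟨ht, ht1.le⟩)
    (Set.mem_Icc.2 ⟨zero_le_one, le_refl 1⟩) ht1
  rwa [gg_one] at this

lemma gg_succ_gt (i : ℕ) (t : ℝ) (ht : 0 < t) (ht1 : t < 1) : gg i t < gg (i+1) t := by
  have ha0 := gg_pos i t ht ht1.le
  have ha1 := gg_lt_one i t ht.le ht1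
  set a := gg i t
  have hc0 := cc_pos i
  set c := 2/((i:ℝ)+1)
  show a < Real.sqrt (c*(a - a^2) + a^2)
  rw [Real.lt_sqrt ha0.le]
  nlinarith [mul_pos (mul_pos hc0 ha0) (sub_pos.2 ha1)]

lemma gg_idx_strictMono (t : ℝ) (ht : 0 < t) (ht1 : t < 1) :
    StrictMono (fun i => gg i t) :=
  strictMono_nat_of_lt_succ (fun i => gg_succ_gt i t ht ht1)

lemma coef_eq (B : ℝ) (hB : 0 < B) (k : ℕ) (hk : 0 < k) (i : ℕ) :
    (B / k) * (2 / (((i : ℝ) * B / k) + B / k)) = 2/((i:ℝ)+1) := by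
  have hk0 : (0:ℝ) < k := by exact_mod_cast hk
  have h1 : ((i : ℝ) * B / k) + B / k = ((i:ℝ)+1) * B / k := by ring
  rw [h1]
  have hi1 : (0:ℝ) < (i:ℝ)+1 := by positivity
  field_simp

/-- In the discretized two-bidder game with grid `r_i = (i-1)·B/k` (here `x j` for
`j : Fin k` encodes the paper's `x_{j+1}`), there is a unique vector `x` satisfying:
(a) the recursion `x_{i+1} = √((B/k)·(2/(r_i + B/k))·(x_i - x_i²) + x_i²)` for
`1 ≤ i ≤ k-1`; (b) the mean-value constraint `(B/k)·Σ (1 - x_i) = μ`; and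
(c) `0 < x_1 < x_2 < ⋯ < x_k < 1`. -/
theorem discrete_adversary_exists_unique (B μ : ℝ) (hB : 0 < B)
    (hμ0 : 0 < μ) (hμB : μ < B) (k : ℕ) (hk : 1 < k) :
    ∃! x : Fin k → ℝ,
      (∀ (i : ℕ) (h : i + 1 < k),
        x ⟨i + 1, h⟩ = Real.sqrt
          ((B / k) * (2 / (((i : ℝ) * B / k) + B / k))
              * (x ⟨i, by omega⟩ - x ⟨i, by omega⟩ ^ 2)
            + x ⟨i, by omega⟩ ^ 2)) ∧
      (B / k) * (∑ j : Fin k, (1 - x j)) = μ ∧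
      StrictMono x ∧ 0 < x ⟨0, by omega⟩ ∧ x ⟨k - 1, by omega⟩ < 1 := by
  have hk0 : 0 < k := by omega
  have hkR : (0:ℝ) < k := by exact_mod_cast hk0
  set S : ℝ → ℝ := fun t => ∑ j : Fin k, (1 - gg (j:ℕ) t) with hSdef
  have hScont : Continuous S := by
    apply continuous_finset_sum
    intro j _
    exact continuous_const.sub (gg_continuous j)
  have hS0 : S 0 = k := by simp [hSdef, gg_zero]
  have hS1 : S 1 = 0 := by simp [hSdef, gg_one]
  have hSanti : StrictAntiOn S (Set.Icc 0 1) := by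
    intro y hy z hz hyz
    apply Finset.sum_lt_sum
    · intro j _
      have := (gg_strictMonoOn (j:ℕ)).monotoneOn hy hz hyz.le
      linarith
    · refine ⟨⟨0, hk0⟩, Finset.mem_univ _, ?_⟩
      have : gg 0 y < gg 0 z := hyz
      simpa using this
  set m := μ * k / B with hmdef
  have hm0 : 0 < m := by positivity
  have hmk : m < k := by
    rw [hmdef, div_lt_iff₀ hB]
    nlinarith
  obtain ⟨t, htmem, htS⟩ := intermediate_value_Icc' zero_le_one hScont.continuousOn
    (show m ∈ Set.Icc (S 1) (S 0) by rw [hS0, hS1]; exact ⟨hm0.le, hmk.le⟩)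
  have ht0 : 0 < t := by
    rcases eq_or_lt_of_le htmem.1 with h | h
    · rw [← h, hS0] at htS; linarith
    · exact h
  have ht1 : t < 1 := by
    rcases eq_or_lt_of_le htmem.2 with h | h
    · rw [h, hS1] at htS; linarith
    · exact h
  refine ⟨fun j => gg (j:ℕ) t, ⟨?_, ?_, ?_, ?_, ?_⟩, ?_⟩
  · intro i h
    show gg (i+1) t = _
    rw [coef_eq B hB k hk0 i]
    rfl
  · show (B/k) * S t = μ
    rw [htS, hmdef]
    field_simp
  · intro a b hab
    exact gg_idx_strictMono t ht0 ht1 (Fin.lt_def.mp hab)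
  · exact ht0
  · exact gg_lt_one (k-1) t ht0.le ht1
  · rintro y ⟨hrec, hsum, hmono, hy0, hyk⟩
    set s := y ⟨0, by omega⟩ with hsdef
    have hs1 : s < 1 := by
      have h01 : (⟨0, by omega⟩ : Fin k) < ⟨k-1, by omega⟩ := by
        rw [Fin.lt_def]; simp; omega
      have := hmono h01
      calc s < y ⟨k-1, by omega⟩ := this
        _ < 1 := hyk
    have hyg : ∀ i (hi : i < k), y ⟨i, hi⟩ = gg i s := by
      intro i
      induction i with
      | zero => intro hi; rfl
      | succ n ih =>
        intro hi
        have hn : n < k := by omega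
        rw [hrec n hi]
        rw [show (⟨n, by omega⟩ : Fin k) = ⟨n, hn⟩ from rfl, ih hn,
          coef_eq B hB k hk0 n]
        rfl
    have hsumS : S s = m := by
      have hxy : ∑ j : Fin k, (1 - y j) = S s := by
        apply Finset.sum_congr rfl
        intro j _
        have := hyg j.val j.isLt
        rw [Fin.eta] at this
        rw [this]
      rw [hxy] at hsum
      rw [hmdef, eq_div_iff hB.ne']
      field_simp at hsum
      linarith
    have hst : s = t := by
      apply hSanti.injOn (Set.mem_Icc.2 ⟨hy0.le, hs1.le⟩) htmem
      rw [hsumS, htS]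
    funext j
    have := hyg j.val j.isLt
    rw [Fin.eta] at this
    rw [this, hst]
end
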